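/- arXiv:2503.24114 — 7 statements merged into one kernel-verified Lean document; each statement's English description precedes it below -/
import Mathlib

section
/- Let f : [1,∞) → [0,∞) be continuous, and suppose there exist constants C₀ > 0, C₁ > 0, C₂ ≥ 0, C₃ ≥ 0, p > 1, and 0 ≤ γ < 1 such that for all 1 ≤ x₁ < x₂ one has f(x₂) + C₁ ∫_{x₁}^{x₂} x^{-γ} f(x) dx ≤ C₀ f(x₁) + C₂ ∫_{x₁}^{x₂} x^{-p} dx + C₃ x₁^{-p}. Then there exists a constant C, depending only on f(1), C₀, C₁, C₂, C₃, p, γ, such that f(x₁) ≤ C x₁^{-p+γ} for all x₁ ≥ 1. -/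
open MeasureTheory Set intervalIntegral

theorem aux_integ (f : ℝ → ℝ) (hf : ContinuousOn f (Set.Ici 1)) (γ : ℝ) (a b : ℝ)
    (ha : 1 ≤ a) (hab : a ≤ b) :
    IntervalIntegrable (fun t : ℝ => t ^ (-γ) * f t) volume a b := by
  apply ContinuousOn.intervalIntegrable
  rw [Set.uIcc_of_le hab]
  have h1 : ContinuousOn (fun t : ℝ => t ^ (-γ)) (Set.Icc a b) := by
    apply ContinuousOn.rpow_const continuousOn_id
    intro t ht
    exact Or.inl (by simp only [id_eq]; nlinarith [ht.1])
  exact h1.mul (hf.mono (fun t ht => le_trans ha ht.1))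

theorem aux_integ2 (p : ℝ) (a b : ℝ) (ha : 1 ≤ a) (hab : a ≤ b) :
    IntervalIntegrable (fun t : ℝ => t ^ (-p)) volume a b := by
  apply ContinuousOn.intervalIntegrable
  rw [Set.uIcc_of_le hab]
  apply ContinuousOn.rpow_const continuousOn_id
  intro t ht
  exact Or.inl (by simp only [id_eq]; nlinarith [ht.1])

theorem aux_key (f : ℝ → ℝ) (hnn : ∀ x : ℝ, 1 ≤ x → 0 ≤ f x)
    (C₀ C₁ C₂ C₃ p γ : ℝ) (hC₂ : 0 ≤ C₂) (hp : 1 < p)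
    (hineq : ∀ x₁ x₂ : ℝ, 1 ≤ x₁ → x₁ < x₂ →
      f x₂ + C₁ * (∫ x in x₁..x₂, x ^ (-γ) * f x) ≤
        C₀ * f x₁ + C₂ * (∫ x in x₁..x₂, x ^ (-p)) + C₃ * x₁ ^ (-p))
    (x₁ x₂ : ℝ) (h1 : 1 ≤ x₁) (h12 : x₁ < x₂) :
    f x₂ + C₁ * (∫ x in x₁..x₂, x ^ (-γ) * f x) ≤
      C₀ * f x₁ + C₂ * ((x₂ - x₁) * x₁ ^ (-p)) + C₃ * x₁ ^ (-p) := by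
  have h0 : (0:ℝ) < x₁ := by linarith
  have hint : (∫ x in x₁..x₂, x ^ (-p)) ≤ (x₂ - x₁) * x₁ ^ (-p) := by
    have h2 : (∫ x in x₁..x₂, (x₁ : ℝ) ^ (-p)) = (x₂ - x₁) * x₁ ^ (-p) := by
      rw [intervalIntegral.integral_const, smul_eq_mul]
    rw [← h2]
    apply intervalIntegral.integral_mono_on h12.le (aux_integ2 p x₁ x₂ h1 h12.le)
      (intervalIntegrable_const)
    intro t ht
    exact Real.rpow_le_rpow_of_nonpos h0 ht.1 (by linarith)
  calc f x₂ + C₁ * (∫ x in x₁..x₂, x ^ (-γ) * f x)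
      ≤ C₀ * f x₁ + C₂ * (∫ x in x₁..x₂, x ^ (-p)) + C₃ * x₁ ^ (-p) := hineq x₁ x₂ h1 h12
    _ ≤ C₀ * f x₁ + C₂ * ((x₂ - x₁) * x₁ ^ (-p)) + C₃ * x₁ ^ (-p) := by
        have := mul_le_mul_of_nonneg_left hint hC₂; linarith

theorem aux_intnn (f : ℝ → ℝ) (hnn : ∀ x : ℝ, 1 ≤ x → 0 ≤ f x) (γ : ℝ)
    (x₁ x₂ : ℝ) (h1 : 1 ≤ x₁) (h12 : x₁ ≤ x₂) :
    0 ≤ ∫ x in x₁..x₂, x ^ (-γ) * f x := by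
  apply intervalIntegral.integral_nonneg h12
  intro t ht
  have ht1 : (1:ℝ) ≤ t := le_trans h1 ht.1
  have : (0:ℝ) ≤ t ^ (-γ) := Real.rpow_nonneg (by linarith) _
  exact mul_nonneg this (hnn t ht1)

theorem aux_bound (f : ℝ → ℝ) (hnn : ∀ x : ℝ, 1 ≤ x → 0 ≤ f x)
    (C₀ C₁ C₂ C₃ p γ : ℝ) (hC₁ : 0 < C₁) (hC₂ : 0 ≤ C₂) (hC₃ : 0 ≤ C₃) (hp : 1 < p)
    (hineq : ∀ x₁ x₂ : ℝ, 1 ≤ x₁ → x₁ < x₂ →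
      f x₂ + C₁ * (∫ x in x₁..x₂, x ^ (-γ) * f x) ≤
        C₀ * f x₁ + C₂ * (∫ x in x₁..x₂, x ^ (-p)) + C₃ * x₁ ^ (-p)) :
    ∀ y : ℝ, 1 ≤ y → f y ≤ max (f 1) (C₀ * f 1 + (C₂ / (p - 1) + C₃)) := by
  intro y hy
  rcases eq_or_lt_of_le hy with h | h
  · exact h ▸ le_max_left _ _
  · have h1 := hineq 1 y le_rfl h
    have h2 : (0:ℝ) ≤ ∫ x in (1:ℝ)..y, x ^ (-γ) * f x := aux_intnn f hnn γ 1 y le_rfl hy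
    have h3 : (∫ x in (1:ℝ)..y, x ^ (-p)) ≤ 1 / (p - 1) := by
      rw [integral_rpow (Or.inr ⟨by intro hc; nlinarith, by
        rw [Set.uIcc_of_le hy]; intro hc; exact absurd hc.1 (by norm_num)⟩)]
      have hy1p : (0:ℝ) ≤ y ^ (-p + 1) := Real.rpow_nonneg (by linarith) _
      rw [Real.one_rpow]
      have heq : (y ^ (-p + 1) - 1) / (-p + 1) = (1 - y ^ (-p + 1)) / (p - 1) := by
        rw [div_eq_div_iff (by linarith) (by linarith)]; ring
      rw [heq, div_le_div_iff₀ (by linarith) (by linarith)]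
      nlinarith
    have h4 : (1:ℝ) ^ (-p) = 1 := Real.one_rpow _
    have h5 := mul_le_mul_of_nonneg_left h3 hC₂
    rw [mul_one_div] at h5
    have hfin : f y ≤ C₀ * f 1 + (C₂ / (p - 1) + C₃) := by
      rw [h4] at h1
      linarith [mul_nonneg hC₁.le h2, h5]
    exact le_trans hfin (le_max_right _ _)

set_option maxHeartbeats 2000000 in
theorem aux_step (f : ℝ → ℝ) (hf : ContinuousOn f (Set.Ici 1))
    (hnn : ∀ x : ℝ, 1 ≤ x → 0 ≤ f x)
    (C₀ C₁ C₂ C₃ p γ : ℝ) (hC₀ : 0 < C₀) (hC₁ : 0 < C₁) (hC₂ : 0 ≤ C₂) (hC₃ : 0 ≤ C₃)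
    (hp : 1 < p) (hγ₀ : 0 ≤ γ) (hγ₁ : γ < 1)
    (hineq : ∀ x₁ x₂ : ℝ, 1 ≤ x₁ → x₁ < x₂ →
      f x₂ + C₁ * (∫ x in x₁..x₂, x ^ (-γ) * f x) ≤
        C₀ * f x₁ + C₂ * (∫ x in x₁..x₂, x ^ (-p)) + C₃ * x₁ ^ (-p))
    (M : ℝ) (hM0 : 0 ≤ M) (hMb : ∀ y : ℝ, 1 ≤ y → f y ≤ M)
    (a a' θ R Ymax K : ℝ) (ha0 : 0 ≤ a) (hapγ : a ≤ p - γ) (ha'0 : 0 ≤ a')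
    (ha'1 : a' ≤ a + θ - γ) (ha'2 : a' ≤ p - θ) (ha'3 : a' ≤ p - γ)
    (hK : 0 ≤ K) (hR : 0 < R) (hY2 : 2 ≤ Ymax)
    (hY : ∀ y : ℝ, Ymax ≤ y → 1 ≤ R * y ^ θ ∧ R * y ^ θ ≤ y / 2)
    (hbd : ∀ y : ℝ, 1 ≤ y → f y ≤ K * y ^ (-a))
    (cA cB : ℝ) (hcAdef : cA = max C₀ 1 * C₀ * 2 ^ p / C₁)
    (hcBdef : cB = max C₀ 1 * 2 ^ p * (C₂ + C₃) / C₁) :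
    ∀ y : ℝ, 1 ≤ y → f y ≤
      (cA / R * K + cB + 2 ^ p * (C₂ * R + C₃) + M * Ymax ^ (p - γ)) * y ^ (-a') := by
  have hE1 : (1:ℝ) ≤ max C₀ 1 := le_max_right _ _
  have hE0 : (0:ℝ) ≤ max C₀ 1 := by linarith
  set E := max C₀ 1 with hEdef
  have h2p : (0:ℝ) < 2 ^ p := Real.rpow_pos_of_pos (by norm_num) _
  have hcA0 : 0 ≤ cA := by rw [hcAdef]; positivity
  have hcB0 : 0 ≤ cB := by rw [hcBdef]; positivity
  intro y hy
  have hy0 : (0:ℝ) < y := by linarith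
  have hu0 : (0:ℝ) < y ^ (-a') := Real.rpow_pos_of_pos hy0 _
  have hYm0 : (0:ℝ) ≤ Ymax ^ (p - γ) := Real.rpow_nonneg (by linarith) _
  have hc30 : (0:ℝ) ≤ 2 ^ p * (C₂ * R + C₃) := by positivity
  by_cases hyY : y < Ymax
  · -- small y : use global bound M
    have h1 : f y ≤ M := hMb y hy
    have h2 : (1:ℝ) ≤ Ymax ^ a' * y ^ (-a') := by
      have h3 : y ^ a' ≤ Ymax ^ a' := Real.rpow_le_rpow hy0.le hyY.le ha'0
      have hyp : 0 < y ^ a' := Real.rpow_pos_of_pos hy0 _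
      rw [Real.rpow_neg hy0.le, ← div_eq_mul_inv, le_div_iff₀ hyp, one_mul]
      exact h3
    have h4 : M * Ymax ^ a' ≤ M * Ymax ^ (p - γ) :=
      mul_le_mul_of_nonneg_left
        (Real.rpow_le_rpow_of_exponent_le (by linarith) ha'3) hM0
    calc f y ≤ M := h1
      _ ≤ M * (Ymax ^ a' * y ^ (-a')) := le_mul_of_one_le_right hM0 h2
      _ = (M * Ymax ^ a') * y ^ (-a') := by ring
      _ ≤ (cA / R * K + cB + 2 ^ p * (C₂ * R + C₃) + M * Ymax ^ (p - γ)) * y ^ (-a') := by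
          apply mul_le_mul_of_nonneg_right _ hu0.le
          have hRK : 0 ≤ cA / R * K := by positivity
          linarith
  · push_neg at hyY
    have hy2 : (2:ℝ) ≤ y := le_trans hY2 hyY
    obtain ⟨hδ1, hδ2⟩ := hY y hyY
    set δ := R * y ^ θ with hδdef
    set x₁ := y - δ with hx₁def
    have hδ0 : (0:ℝ) < δ := by linarith
    have hx₁l : y / 2 ≤ x₁ := by rw [hx₁def]; linarith
    have hx₁1 : (1:ℝ) ≤ x₁ := by linarith
    have hx₁y : x₁ < y := by rw [hx₁def]; linarith
    have hyx : y - x₁ = δ := by rw [hx₁def]; ring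
    -- minimum point on [x₁, y]
    obtain ⟨ξ, hξmem, hξmin⟩ : ∃ ξ ∈ Icc x₁ y, ∀ t ∈ Icc x₁ y, f ξ ≤ f t := by
      obtain ⟨ξ, hmem, hmin⟩ := IsCompact.exists_isMinOn isCompact_Icc
        (Set.nonempty_Icc.mpr hx₁y.le)
        (hf.mono (fun t ht => le_trans hx₁1 ht.1))
      exact ⟨ξ, hmem, fun t ht => hmin ht⟩
    have hξ1 : (1:ℝ) ≤ ξ := le_trans hx₁1 hξmem.1
    have hξhalf : y / 2 ≤ ξ := le_trans hx₁l hξmem.1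
    have hfξ0 : 0 ≤ f ξ := hnn ξ hξ1
    set W := ∫ t in x₁..y, t ^ (-γ) * f t with hWdef
    -- lower bound for the integral
    have hlow : δ * (y ^ (-γ) * f ξ) ≤ W := by
      have hconst : (∫ _t in x₁..y, y ^ (-γ) * f ξ) = δ * (y ^ (-γ) * f ξ) := by
        rw [intervalIntegral.integral_const, smul_eq_mul, hyx]
      rw [← hconst, hWdef]
      apply intervalIntegral.integral_mono_on hx₁y.le intervalIntegrable_const
        (aux_integ f hf γ x₁ y hx₁1 hx₁y.le)
      intro t ht
      have ht0 : (0:ℝ) < t := lt_of_lt_of_le one_pos (le_trans hx₁1 ht.1)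
      apply mul_le_mul (Real.rpow_le_rpow_of_nonpos ht0 ht.2 (by linarith)) (hξmin t ht)
        hfξ0 (Real.rpow_nonneg ht0.le _)
    -- upper bound for the integral
    have hup : C₁ * W ≤ C₀ * f x₁ + (C₂ * δ + C₃) * x₁ ^ (-p) := by
      have h1 := aux_key f hnn C₀ C₁ C₂ C₃ p γ hC₂ hp hineq x₁ y hx₁1 hx₁y
      have h2 : 0 ≤ f y := hnn y hy
      rw [hyx] at h1
      have e : (C₂ * δ + C₃) * x₁ ^ (-p) = C₂ * (δ * x₁ ^ (-p)) + C₃ * x₁ ^ (-p) := by ring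
      rw [e]
      linarith
    set d : ℝ := C₁ * (δ * y ^ (-γ)) with hddef
    have hyγ : (0:ℝ) < y ^ (-γ) := Real.rpow_pos_of_pos hy0 _
    have hd0 : (0:ℝ) < d := by positivity
    set N : ℝ := C₀ * f x₁ + (C₂ * δ + C₃) * x₁ ^ (-p) with hNdef
    have hξb : f ξ ≤ N / d := by
      rw [le_div_iff₀ hd0]
      calc f ξ * d = C₁ * (δ * (y ^ (-γ) * f ξ)) := by rw [hddef]; ring
        _ ≤ C₁ * W := by apply mul_le_mul_of_nonneg_left hlow hC₁.le
        _ ≤ N := hup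
    -- bounds in terms of powers of y
    have h2a : (2:ℝ) ^ a ≤ 2 ^ p := Real.rpow_le_rpow_of_exponent_le (by norm_num) (by linarith)
    have hhalf : ∀ s : ℝ, 0 ≤ s → ∀ t : ℝ, y / 2 ≤ t → t ^ (-s) ≤ 2 ^ s * y ^ (-s) := by
      intro s hs t htl
      have hy20 : (0:ℝ) < y / 2 := by linarith
      have e1 : (y / 2) ^ (-s) = 2 ^ s * y ^ (-s) := by
        rw [Real.div_rpow hy0.le (by norm_num : (0:ℝ) ≤ 2), Real.rpow_neg (by norm_num : (0:ℝ) ≤ 2)]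
        field_simp
      rw [← e1]
      exact Real.rpow_le_rpow_of_nonpos hy20 htl (by linarith)
    have hfx₁ : f x₁ ≤ K * (2 ^ p * y ^ (-a)) := by
      calc f x₁ ≤ K * x₁ ^ (-a) := hbd x₁ hx₁1
        _ ≤ K * (2 ^ a * y ^ (-a)) :=
            mul_le_mul_of_nonneg_left (hhalf a ha0 x₁ hx₁l) hK
        _ ≤ K * (2 ^ p * y ^ (-a)) := by
            apply mul_le_mul_of_nonneg_left _ hK
            exact mul_le_mul_of_nonneg_right h2a (Real.rpow_nonneg hy0.le _)
    have hx₁p : x₁ ^ (-p) ≤ 2 ^ p * y ^ (-p) := hhalf p (by linarith) x₁ hx₁l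
    have hξp : ξ ^ (-p) ≤ 2 ^ p * y ^ (-p) := hhalf p (by linarith) ξ hξhalf
    set N' : ℝ := C₀ * (K * (2 ^ p * y ^ (-a))) + (C₂ * δ + C₃) * (2 ^ p * y ^ (-p)) with hN'def
    have hNN' : N ≤ N' := by
      rw [hNdef, hN'def]
      have t1 := mul_le_mul_of_nonneg_left hfx₁ hC₀.le
      have t2 := mul_le_mul_of_nonneg_left hx₁p (by positivity : (0:ℝ) ≤ C₂ * δ + C₃)
      linarith
    have hξb2 : f ξ ≤ N' / d := le_trans hξb (by gcongr)
    -- from ξ to y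
    have hnnterm : (0:ℝ) ≤ (C₂ * δ + C₃) * (2 ^ p * y ^ (-p)) := by positivity
    have hfy : f y ≤ E * f ξ + (C₂ * δ + C₃) * (2 ^ p * y ^ (-p)) := by
      rcases eq_or_lt_of_le hξmem.2 with heq | hlt
      · have hfyξ : f y = f ξ := by rw [heq]
        linarith [hnnterm, mul_nonneg (by linarith : (0:ℝ) ≤ E - 1) hfξ0]
      · have h1 := aux_key f hnn C₀ C₁ C₂ C₃ p γ hC₂ hp hineq ξ y hξ1 hlt
        have h2 := aux_intnn f hnn γ ξ y hξ1 hlt.le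
        have h3 : y - ξ ≤ δ := by
          have := hξmem.1; rw [hx₁def] at this; linarith
        have h4 : (0:ℝ) ≤ ξ ^ (-p) := Real.rpow_nonneg (by linarith) _
        have t1 : C₂ * ((y - ξ) * ξ ^ (-p)) ≤ C₂ * (δ * (2 ^ p * y ^ (-p))) := by
          apply mul_le_mul_of_nonneg_left _ hC₂
          exact mul_le_mul h3 hξp h4 hδ0.le
        have t2 : C₃ * ξ ^ (-p) ≤ C₃ * (2 ^ p * y ^ (-p)) := mul_le_mul_of_nonneg_left hξp hC₃
        have t3 : C₀ * f ξ ≤ E * f ξ := mul_le_mul_of_nonneg_right (le_max_left _ _) hfξ0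
        have e : (C₂ * δ + C₃) * (2 ^ p * y ^ (-p))
            = C₂ * (δ * (2 ^ p * y ^ (-p))) + C₃ * (2 ^ p * y ^ (-p)) := by ring
        rw [e]
        linarith [mul_nonneg hC₁.le h2]
    -- rewrite d
    have hyθ : (0:ℝ) < y ^ θ := Real.rpow_pos_of_pos hy0 _
    have hd2 : d = C₁ * R * y ^ (θ - γ) := by
      rw [hddef, hδdef, show θ - γ = θ + -γ by ring, Real.rpow_add hy0]; ring
    have hyθγ : (0:ℝ) < y ^ (θ - γ) := Real.rpow_pos_of_pos hy0 _
    have hA : E * (C₀ * (K * (2 ^ p * y ^ (-a))) / d) ≤ cA / R * K * y ^ (-a') := by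
      have e1 : E * (C₀ * (K * (2 ^ p * y ^ (-a))) / d)
          = (E * C₀ * 2 ^ p * K / (C₁ * R)) * (y ^ (-a) / y ^ (θ - γ)) := by
        rw [hd2]; field_simp [hC₁.ne', hR.ne', hyθγ.ne']
      have e2 : y ^ (-a) / y ^ (θ - γ) = y ^ (-a - (θ - γ)) := (Real.rpow_sub hy0 _ _).symm
      have e3 : y ^ (-a - (θ - γ)) ≤ y ^ (-a') :=
        Real.rpow_le_rpow_of_exponent_le hy (by linarith)
      rw [e1, e2]
      calc (E * C₀ * 2 ^ p * K / (C₁ * R)) * y ^ (-a - (θ - γ))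
          ≤ (E * C₀ * 2 ^ p * K / (C₁ * R)) * y ^ (-a') :=
            mul_le_mul_of_nonneg_left e3 (by positivity)
        _ = cA / R * K * y ^ (-a') := by
            rw [hcAdef]; field_simp
    have hB : E * ((C₂ * δ + C₃) * (2 ^ p * y ^ (-p)) / d) ≤ cB * y ^ (-a') := by
      have hq : (C₂ * δ + C₃) / δ ≤ C₂ + C₃ := by
        rw [div_le_iff₀ hδ0]
        have := mul_le_mul_of_nonneg_left hδ1 hC₃
        have e : (C₂ + C₃) * δ = C₂ * δ + C₃ * δ := by ring
        linarith
      have e1 : E * ((C₂ * δ + C₃) * (2 ^ p * y ^ (-p)) / d)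
          = (E * 2 ^ p / C₁) * ((C₂ * δ + C₃) / δ) * (y ^ (-p) * y ^ γ) := by
        rw [hddef, Real.rpow_neg hy0.le γ]
        have hyγ' : (0:ℝ) < y ^ γ := Real.rpow_pos_of_pos hy0 _
        field_simp
      have e2 : y ^ (-p) * y ^ γ = y ^ (γ - p) := by
        rw [show γ - p = -p + γ by ring, Real.rpow_add hy0]
      have e3 : y ^ (γ - p) ≤ y ^ (-a') := Real.rpow_le_rpow_of_exponent_le hy (by linarith)
      rw [e1, e2]
      have hq0 : 0 ≤ (C₂ * δ + C₃) / δ := by positivity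
      calc (E * 2 ^ p / C₁) * ((C₂ * δ + C₃) / δ) * y ^ (γ - p)
          ≤ (E * 2 ^ p / C₁) * (C₂ + C₃) * y ^ (-a') := by
            apply mul_le_mul _ e3 (Real.rpow_nonneg hy0.le _) (by positivity)
            exact mul_le_mul_of_nonneg_left hq (by positivity)
        _ = cB * y ^ (-a') := by rw [hcBdef]; ring
    have hC' : (C₂ * δ + C₃) * (2 ^ p * y ^ (-p)) ≤ 2 ^ p * (C₂ * R + C₃) * y ^ (-a') := by
      have e1 : (C₂ * δ + C₃) * (2 ^ p * y ^ (-p))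
          = 2 ^ p * (C₂ * R * (y ^ θ * y ^ (-p)) + C₃ * y ^ (-p)) := by
        rw [hδdef]; ring
      have e2 : y ^ θ * y ^ (-p) = y ^ (θ - p) := by
        rw [show θ - p = θ + -p by ring, Real.rpow_add hy0]
      have e3 : y ^ (θ - p) ≤ y ^ (-a') := Real.rpow_le_rpow_of_exponent_le hy (by linarith)
      have e4 : y ^ (-p) ≤ y ^ (-a') := Real.rpow_le_rpow_of_exponent_le hy (by linarith)
      rw [e1, e2]
      have h5 : C₂ * R * y ^ (θ - p) + C₃ * y ^ (-p) ≤ C₂ * R * y ^ (-a') + C₃ * y ^ (-a') := by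
        have u1 := mul_le_mul_of_nonneg_left e3 (by positivity : (0:ℝ) ≤ C₂ * R)
        have u2 := mul_le_mul_of_nonneg_left e4 hC₃
        linarith
      calc 2 ^ p * (C₂ * R * y ^ (θ - p) + C₃ * y ^ (-p))
          ≤ 2 ^ p * (C₂ * R * y ^ (-a') + C₃ * y ^ (-a')) := mul_le_mul_of_nonneg_left h5 h2p.le
        _ = 2 ^ p * (C₂ * R + C₃) * y ^ (-a') := by ring
    have hEfξ : E * f ξ ≤ E * (N' / d) := mul_le_mul_of_nonneg_left hξb2 hE0
    have hsplit : E * (N' / d) = E * (C₀ * (K * (2 ^ p * y ^ (-a))) / d)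
        + E * ((C₂ * δ + C₃) * (2 ^ p * y ^ (-p)) / d) := by
      rw [hN'def]; ring
    have hfinal : f y ≤ (cA / R * K + cB + 2 ^ p * (C₂ * R + C₃)) * y ^ (-a') := by
      have expand : (cA / R * K + cB + 2 ^ p * (C₂ * R + C₃)) * y ^ (-a')
          = cA / R * K * y ^ (-a') + cB * y ^ (-a') + 2 ^ p * (C₂ * R + C₃) * y ^ (-a') := by
        ring
      rw [expand]
      linarith [hfy, hEfξ, hsplit, hA, hB, hC']
    have hlast : 0 ≤ M * Ymax ^ (p - γ) * y ^ (-a') := by positivity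
    refine le_trans hfinal (mul_le_mul_of_nonneg_right ?_ hu0.le)
    linarith [mul_nonneg hM0 hYm0]



set_option maxHeartbeats 2000000 in
theorem stmt_0 (f : ℝ → ℝ) (hf : ContinuousOn f (Set.Ici 1))
    (hnn : ∀ x : ℝ, 1 ≤ x → 0 ≤ f x)
    (C₀ C₁ C₂ C₃ p γ : ℝ) (hC₀ : 0 < C₀) (hC₁ : 0 < C₁) (hC₂ : 0 ≤ C₂) (hC₃ : 0 ≤ C₃)
    (hp : 1 < p) (hγ₀ : 0 ≤ γ) (hγ₁ : γ < 1)
    (hineq : ∀ x₁ x₂ : ℝ, 1 ≤ x₁ → x₁ < x₂ →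
      f x₂ + C₁ * (∫ x in x₁..x₂, x ^ (-γ) * f x) ≤
        C₀ * f x₁ + C₂ * (∫ x in x₁..x₂, x ^ (-p)) + C₃ * x₁ ^ (-p)) :
    ∃ C : ℝ, ∀ x₁ : ℝ, 1 ≤ x₁ → f x₁ ≤ C * x₁ ^ (-p + γ) := by
  obtain ⟨M, hMdef⟩ : ∃ x : ℝ, x = max (f 1) (C₀ * f 1 + (C₂ / (p - 1) + C₃)) := ⟨_, rfl⟩
  have hM0 : 0 ≤ M := by
    rw [hMdef]; exact le_trans (hnn 1 le_rfl) (le_max_left _ _)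
  have hMb : ∀ y : ℝ, 1 ≤ y → f y ≤ M := by
    rw [hMdef]; exact aux_bound f hnn C₀ C₁ C₂ C₃ p γ hC₁ hC₂ hC₃ hp hineq
  obtain ⟨cA, hcAdef⟩ : ∃ x : ℝ, x = max C₀ 1 * C₀ * 2 ^ p / C₁ := ⟨_, rfl⟩
  obtain ⟨cB, hcBdef⟩ : ∃ x : ℝ, x = max C₀ 1 * 2 ^ p * (C₂ + C₃) / C₁ := ⟨_, rfl⟩
  have h2p : (0:ℝ) < 2 ^ p := Real.rpow_pos_of_pos (by norm_num) _
  have hE1 : (1:ℝ) ≤ max C₀ 1 := le_max_right _ _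
  have hcA0 : 0 < cA := by
    rw [hcAdef]; positivity
  have hcB0 : 0 ≤ cB := by
    rw [hcBdef]; positivity
  -- PHASE 1 : finitely many capped steps
  have phase1 : ∀ n : ℕ, ∃ K : ℝ, 0 ≤ K ∧
      ∀ y : ℝ, 1 ≤ y → f y ≤ K * y ^ (-(min ((n:ℝ) * (1 - γ)) (p - 1))) := by
    intro n
    induction n with
    | zero =>
      refine ⟨M, hM0, fun y hy => ?_⟩
      rw [Nat.cast_zero, zero_mul, min_eq_left (by linarith), neg_zero, Real.rpow_zero, mul_one]
      exact hMb y hy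
    | succ n ih =>
      obtain ⟨K, hK0, hK⟩ := ih
      have h1 : min (((n:ℝ) + 1) * (1 - γ)) (p - 1) ≤ min ((n:ℝ) * (1 - γ)) (p - 1) + 1 - γ := by
        rcases le_total ((n:ℝ) * (1 - γ)) (p - 1) with h | h
        · rw [min_eq_left h]
          have := min_le_left (((n:ℝ) + 1) * (1 - γ)) (p - 1)
          nlinarith
        · rw [min_eq_right h]
          have := min_le_right (((n:ℝ) + 1) * (1 - γ)) (p - 1)
          linarith
      have key := aux_step f hf hnn C₀ C₁ C₂ C₃ p γ hC₀ hC₁ hC₂ hC₃ hp hγ₀ hγ₁ hineq M hM0 hMb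
        (min ((n:ℝ) * (1 - γ)) (p - 1)) (min (((n:ℝ) + 1) * (1 - γ)) (p - 1)) 1 (1/2) 2 K
        (le_min (mul_nonneg (Nat.cast_nonneg n) (by linarith)) (by linarith))
        (le_trans (min_le_right _ _) (by linarith))
        (le_min (mul_nonneg (by positivity) (by linarith)) (by linarith))
        h1
        (by simpa using min_le_right (((n:ℝ) + 1) * (1 - γ)) (p - 1))
        (le_trans (min_le_right _ _) (by linarith))
        hK0 (by norm_num) le_rfl
        (by
          intro y hy
          rw [Real.rpow_one]
          constructor <;> linarith)
        hK cA cB hcAdef hcBdef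
      refine ⟨cA / (1/2) * K + cB + 2 ^ p * (C₂ * (1/2) + C₃) + M * 2 ^ (p - γ), ?_, ?_⟩
      · have t1 : 0 ≤ cA / (1/2) * K := mul_nonneg (by positivity) hK0
        have t2 : (0:ℝ) ≤ 2 ^ p * (C₂ * (1/2) + C₃) := by positivity
        have t3 : 0 ≤ M * 2 ^ (p - γ) := mul_nonneg hM0 (by positivity)
        linarith
      · intro y hy
        have := key y hy
        push_cast
        exact this
  -- get exponent p - 1
  obtain ⟨K₁, hK₁0, hK₁⟩ : ∃ K : ℝ, 0 ≤ K ∧ ∀ y : ℝ, 1 ≤ y → f y ≤ K * y ^ (-(p - 1)) := by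
    set N : ℕ := ⌈(p - 1) / (1 - γ)⌉₊ with hNdef
    obtain ⟨K, hK0, hK⟩ := phase1 N
    refine ⟨K, hK0, fun y hy => ?_⟩
    have h1 : (p - 1) / (1 - γ) ≤ (N:ℝ) := Nat.le_ceil _
    rw [div_le_iff₀ (by linarith)] at h1
    have h2 : min ((N:ℝ) * (1 - γ)) (p - 1) = p - 1 := min_eq_right (by linarith)
    have := hK y hy
    rwa [h2] at this
  -- PHASE 2 : balanced steps
  obtain ⟨R, hRdef⟩ : ∃ x : ℝ, x = max 1 (2 * cA) := ⟨_, rfl⟩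
  have hR1 : (1:ℝ) ≤ R := hRdef ▸ le_max_left _ _
  have hRcA : 2 * cA ≤ R := hRdef ▸ le_max_right _ _
  have hR0 : (0:ℝ) < R := by linarith
  have h2R1 : (1:ℝ) ≤ 2 * R := by linarith
  obtain ⟨Ybig, hYbigdef⟩ : ∃ x : ℝ, x = max 2 ((2 * R) ^ ((2:ℝ) / (1 - γ))) := ⟨_, rfl⟩
  have hYbig2 : (2:ℝ) ≤ Ybig := hYbigdef ▸ le_max_left _ _
  obtain ⟨c₂, hc₂def⟩ : ∃ x : ℝ, x = cB + 2 ^ p * (C₂ * R + C₃) + M * Ybig ^ (p - γ) := ⟨_, rfl⟩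
  have hc₂0 : 0 ≤ c₂ := by
    have t1 : (0:ℝ) ≤ 2 ^ p * (C₂ * R + C₃) := by positivity
    have t2 : 0 ≤ M * Ybig ^ (p - γ) := mul_nonneg hM0 (Real.rpow_nonneg (by linarith) _)
    rw [hc₂def]; linarith
  obtain ⟨Kstar, hKstardef⟩ : ∃ x : ℝ, x = max K₁ (2 * c₂) := ⟨_, rfl⟩
  have hKstar0 : 0 ≤ Kstar := hKstardef ▸ le_trans hK₁0 (le_max_left _ _)
  have hKK : K₁ ≤ Kstar := hKstardef ▸ le_max_left _ _
  have hcK : 2 * c₂ ≤ Kstar := hKstardef ▸ le_max_right _ _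
  obtain ⟨s, hsdef⟩ : ∃ s : ℕ → ℝ, s = fun n => p - γ - (1 - γ) * (1/2 : ℝ) ^ n := ⟨_, rfl⟩
  have hsl : ∀ n : ℕ, p - 1 ≤ s n ∧ s n ≤ p - γ := by
    intro n
    have h1 : (0:ℝ) < (1/2:ℝ) ^ n := by positivity
    have h2 : ((1/2:ℝ)) ^ n ≤ 1 := pow_le_one₀ (by norm_num) (by norm_num)
    constructor
    · simp only [hsdef]; nlinarith
    · simp only [hsdef]; nlinarith
  have phase2 : ∀ n : ℕ, ∀ y : ℝ, 1 ≤ y → f y ≤ Kstar * y ^ (-(s n)) := by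
    intro n
    induction n with
    | zero =>
      intro y hy
      have hs0 : s 0 = p - 1 := by rw [hsdef]; norm_num
      rw [hs0]
      exact le_trans (hK₁ y hy) (mul_le_mul_of_nonneg_right hKK (Real.rpow_nonneg (by linarith) _))
    | succ n ih =>
      obtain ⟨θ, hθdef⟩ : ∃ x : ℝ, x = (γ + p - s n) / 2 := ⟨_, rfl⟩
      obtain ⟨hsn1, hsn2⟩ := hsl n
      have hθγ : γ ≤ θ := by rw [hθdef]; linarith
      have hθ2 : θ ≤ (1 + γ) / 2 := by rw [hθdef]; linarith
      have hθ1 : (0:ℝ) < 1 - θ := by linarith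
      have h1θ : (1 - γ) / 2 ≤ 1 - θ := by linarith
      obtain ⟨Ymax, hYmaxdef⟩ : ∃ x : ℝ, x = max 2 ((2 * R) ^ ((1:ℝ) / (1 - θ))) := ⟨_, rfl⟩
      have hYmax2 : (2:ℝ) ≤ Ymax := hYmaxdef ▸ le_max_left _ _
      have hYmaxYbig : Ymax ≤ Ybig := by
        rw [hYmaxdef, hYbigdef]
        apply max_le_max le_rfl
        apply Real.rpow_le_rpow_of_exponent_le h2R1
        rw [div_le_div_iff₀ hθ1 (by linarith)]
        linarith
      have hsrec : s (n + 1) = (s n + p - γ) / 2 := by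
        simp only [hsdef, pow_succ]; ring
      have key := aux_step f hf hnn C₀ C₁ C₂ C₃ p γ hC₀ hC₁ hC₂ hC₃ hp hγ₀ hγ₁ hineq M hM0 hMb
        (s n) (s (n + 1)) θ R Ymax Kstar
        (by linarith) hsn2 (by rw [hsrec]; linarith)
        (by rw [hsrec, hθdef]; ring_nf; linarith [le_refl (0:ℝ)])
        (by rw [hsrec, hθdef]; ring_nf; linarith [le_refl (0:ℝ)])
        (by rw [hsrec]; linarith)
        hKstar0 hR0 hYmax2
        (by
          intro y hy
          have hy2 : (2:ℝ) ≤ y := le_trans hYmax2 hy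
          have hy1 : (1:ℝ) ≤ y := by linarith
          have hy0 : (0:ℝ) < y := by linarith
          have hθ0 : (0:ℝ) ≤ θ := by linarith
          have hyθ1 : (1:ℝ) ≤ y ^ θ := by
            have := Real.rpow_le_rpow_of_exponent_le hy1 hθ0
            rwa [Real.rpow_zero] at this
          constructor
          · nlinarith
          · -- R * y ^ θ ≤ y / 2
            have hA : (2 * R) ^ ((1:ℝ) / (1 - θ)) ≤ y :=
              le_trans (by rw [hYmaxdef]; exact le_max_right _ _) hy
            have hB : ((2 * R) ^ ((1:ℝ) / (1 - θ))) ^ (1 - θ) ≤ y ^ (1 - θ) :=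
              Real.rpow_le_rpow (Real.rpow_nonneg (by linarith) _) hA hθ1.le
            have hC : ((2 * R) ^ ((1:ℝ) / (1 - θ))) ^ (1 - θ) = 2 * R := by
              rw [← Real.rpow_mul (by linarith : (0:ℝ) ≤ 2 * R),
                one_div_mul_cancel hθ1.ne', Real.rpow_one]
            rw [hC] at hB
            have hD : y ^ (1 - θ) * y ^ θ = y := by
              rw [← Real.rpow_add hy0, sub_add_cancel, Real.rpow_one]
            have hyθ0 : (0:ℝ) < y ^ θ := Real.rpow_pos_of_pos hy0 _
            have := mul_le_mul_of_nonneg_right hB hyθ0.le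
            rw [hD] at this
            linarith)
        ih cA cB hcAdef hcBdef
      intro y hy
      have hcoef : cA / R * Kstar + cB + 2 ^ p * (C₂ * R + C₃) + M * Ymax ^ (p - γ) ≤ Kstar := by
        have t1 : cA / R ≤ 1 / 2 := by
          rw [div_le_div_iff₀ hR0 (by norm_num)]
          linarith
        have t2 : cA / R * Kstar ≤ 1 / 2 * Kstar :=
          mul_le_mul_of_nonneg_right t1 hKstar0
        have t3 : M * Ymax ^ (p - γ) ≤ M * Ybig ^ (p - γ) :=
          mul_le_mul_of_nonneg_left
            (Real.rpow_le_rpow (by linarith) hYmaxYbig (by linarith)) hM0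
        rw [hc₂def] at hcK
        linarith
      exact le_trans (key y hy)
        (mul_le_mul_of_nonneg_right hcoef (Real.rpow_nonneg (by linarith) _))
  -- LIMIT
  refine ⟨Kstar, fun x hx => ?_⟩
  have hx0 : (0:ℝ) < x := by linarith
  have h1 : Filter.Tendsto (fun n : ℕ => -(s n)) Filter.atTop (nhds (-(p - γ))) := by
    have h2 : Filter.Tendsto (fun n : ℕ => ((1:ℝ)/2) ^ n) Filter.atTop (nhds 0) :=
      tendsto_pow_atTop_nhds_zero_of_lt_one (by norm_num) (by norm_num)
    have e : (fun n : ℕ => -(s n)) = fun n : ℕ => (1 - γ) * ((1/2:ℝ)) ^ n - (p - γ) := by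
      funext n; simp only [hsdef]; ring
    rw [e]
    have := (h2.const_mul (1 - γ)).sub_const (p - γ)
    simpa using this
  have hcont : ContinuousAt (fun e : ℝ => Kstar * x ^ e) (-(p - γ)) :=
    ContinuousAt.mul continuousAt_const (Real.continuousAt_const_rpow hx0.ne')
  have hten : Filter.Tendsto (fun n : ℕ => Kstar * x ^ (-(s n))) Filter.atTop
      (nhds (Kstar * x ^ (-(p - γ)))) := hcont.tendsto.comp h1
  have hle : ∀ n : ℕ, f x ≤ Kstar * x ^ (-(s n)) := fun n => phase2 n x hx
  have hfin := ge_of_tendsto hten (Filter.Eventually.of_forall hle)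
  rw [show -p + γ = -(p - γ) by ring]
  exact hfin
end

section
/- For every γ > 0, K ∈ ℝ, and κ > 0, the integral ∫_A^∞ exp(−κ x^γ) x^K dx is asymptotically equivalent, as A → ∞, to exp(−κ A^γ) A^{K−γ+1} / (γ κ); that is, the ratio of the integral to exp(−κ A^γ) A^{K−γ+1}/(γκ) tends to 1 as A → ∞. -/
open MeasureTheory Set Filter Real

lemma aux_contOn (γ κ K : ℝ) :
    ContinuousOn (fun x : ℝ => Real.exp (-κ * x ^ γ) * x ^ K) (Ioi 0) := by
  intro x hx
  have hx0 : x ≠ 0 := ne_of_gt hx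
  exact (((continuousAt_const.mul (Real.continuousAt_rpow_const x γ (Or.inl hx0))).rexp).mul
    (Real.continuousAt_rpow_const x K (Or.inl hx0))).continuousWithinAt

lemma aux_tendsto_zero (γ κ s : ℝ) (hγ : 0 < γ) (hκ : 0 < κ) :
    Tendsto (fun A : ℝ => A ^ s * Real.exp (-κ * A ^ γ)) atTop (nhds 0) := by
  have h1 := tendsto_rpow_mul_exp_neg_mul_atTop_nhds_zero (s / γ) κ hκ
  have h2 : Tendsto (fun A : ℝ => A ^ γ) atTop atTop := tendsto_rpow_atTop hγ
  refine (h1.comp h2).congr' ?_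
  filter_upwards [eventually_gt_atTop (0:ℝ)] with A hA
  have : (A ^ γ) ^ (s / γ) = A ^ s := by
    rw [← Real.rpow_mul hA.le, mul_div_cancel₀ _ hγ.ne']
  simp [Function.comp, this]

lemma aux_integrable (γ κ K : ℝ) (hγ : 0 < γ) (hκ : 0 < κ) :
    IntegrableOn (fun x : ℝ => Real.exp (-κ * x ^ γ) * x ^ K) (Ioi 1) := by
  set h : ℝ → ℝ := fun x => Real.exp (-κ * x ^ γ) * x ^ K with hh
  have hcont : ContinuousOn h (Ici 1) :=
    (aux_contOn γ κ K).mono fun x hx => by simp only [mem_Ici] at hx; exact mem_Ioi.mpr (by linarith)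
  have hloc : LocallyIntegrableOn h (Ici 1) := hcont.locallyIntegrableOn measurableSet_Ici
  have hO : h =O[atTop] fun x : ℝ => x ^ (-2 : ℝ) := by
    refine Asymptotics.IsLittleO.isBigO ?_
    rw [Asymptotics.isLittleO_iff_tendsto']
    · refine (aux_tendsto_zero γ κ (K + 2) hγ hκ).congr' ?_
      filter_upwards [eventually_gt_atTop (0:ℝ)] with x hx
      have e2 : x ^ (-2:ℝ) = (x ^ (2:ℝ))⁻¹ := Real.rpow_neg hx.le 2
      have e : x ^ (K + 2:ℝ) = x ^ K * x ^ (2:ℝ) := Real.rpow_add hx K 2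
      rw [e2, div_eq_mul_inv, inv_inv, e]
      simp only [hh]; ring
    · filter_upwards [eventually_gt_atTop (0:ℝ)] with x hx h0
      exact absurd h0 (Real.rpow_pos_of_pos hx _).ne'
  have hInt : IntegrableAtFilter (fun x : ℝ => x ^ (-2 : ℝ)) atTop :=
    ⟨Ioi 1, Ioi_mem_atTop 1, integrableOn_Ioi_rpow_of_lt (by norm_num) one_pos⟩
  exact (hloc.integrableOn_of_isBigO_atTop hO hInt).mono_set Ioi_subset_Ici_self

theorem stmt_1 (γ K κ : ℝ) (hγ : 0 < γ) (hκ : 0 < κ) :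
    Filter.Tendsto
      (fun A : ℝ => (∫ x in Set.Ioi A, Real.exp (-κ * x ^ γ) * x ^ K) /
        (Real.exp (-κ * A ^ γ) * A ^ (K - γ + 1) / (γ * κ)))
      Filter.atTop (nhds 1) := by
  set h : ℝ → ℝ := fun x => Real.exp (-κ * x ^ γ) * x ^ K with hh
  have hint : IntegrableOn h (Ioi 1) := aux_integrable γ κ K hγ hκ
  set C : ℝ := ∫ x in Ioi 1, h x with hC
  set F : ℝ → ℝ := fun A => C - ∫ t in (1:ℝ)..A, h t with hF
  set g : ℝ → ℝ := fun A => Real.exp (-κ * A ^ γ) * A ^ (K - γ + 1) / (γ * κ) with hg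
  set g' : ℝ → ℝ := fun A =>
    Real.exp (-κ * A ^ γ) * (A ^ (K - γ) * ((K - γ + 1) - γ * κ * A ^ γ)) / (γ * κ) with hg'
  have hmeas : ∀ A : ℝ, 0 < A → StronglyMeasurableAtFilter h (nhds A) := fun A hA =>
    ⟨Ioi 0, Ioi_mem_nhds hA, ((aux_contOn γ κ K).aestronglyMeasurable measurableSet_Ioi)⟩
  have hcontAt : ∀ A : ℝ, 0 < A → ContinuousAt h A := fun A hA =>
    ((continuousAt_const.mul (Real.continuousAt_rpow_const A γ (Or.inl hA.ne'))).rexp).mul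
      (Real.continuousAt_rpow_const A K (Or.inl hA.ne'))
  have hFderiv : ∀ A : ℝ, 1 < A → HasDerivAt F (-(h A)) A := by
    intro A hA
    have hii : IntervalIntegrable h volume 1 A := by
      rw [intervalIntegrable_iff_integrableOn_Ioc_of_le hA.le]
      exact hint.mono_set Ioc_subset_Ioi_self
    have := intervalIntegral.integral_hasDerivAt_right hii (hmeas A (by linarith))
      (hcontAt A (by linarith))
    exact this.const_sub C
  have hgderiv : ∀ A : ℝ, 0 < A → HasDerivAt g (g' A) A := by
    intro A hA
    have h1 : HasDerivAt (fun A : ℝ => A ^ γ) (γ * A ^ (γ - 1)) A :=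
      Real.hasDerivAt_rpow_const (Or.inl hA.ne')
    have h2 : HasDerivAt (fun A : ℝ => -κ * A ^ γ) (-κ * (γ * A ^ (γ - 1))) A := h1.const_mul _
    have h3 := h2.exp
    have h4 : HasDerivAt (fun A : ℝ => A ^ (K - γ + 1)) ((K - γ + 1) * A ^ (K - γ + 1 - 1)) A :=
      Real.hasDerivAt_rpow_const (Or.inl hA.ne')
    have h5 := (h3.mul h4).div_const (γ * κ)
    convert h5 using 1
    case e'_4 => rfl
    case e'_5 => rfl
    case e'_8 => rfl
    have e1 : A ^ (γ - 1) * A ^ (K - γ + 1) = A ^ γ * A ^ (K - γ) := by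
      rw [← Real.rpow_add hA, ← Real.rpow_add hA]
      congr 1; ring
    have e2 : K - γ + 1 - 1 = K - γ := by ring
    simp only [hg']
    rw [e2]
    rw [div_eq_div_iff (by positivity) (by positivity)]
    linear_combination γ * κ * (κ * γ) * Real.exp (-κ * A ^ γ) * e1
  have hbig : ∀ᶠ A : ℝ in atTop, (K - γ + 1) < γ * κ * A ^ γ := by
    have : Tendsto (fun A : ℝ => γ * κ * A ^ γ) atTop atTop :=
      (tendsto_rpow_atTop hγ).const_mul_atTop (by positivity)
    exact this.eventually_gt_atTop _
  have hg'ne : ∀ᶠ A : ℝ in atTop, g' A ≠ 0 := by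
    filter_upwards [hbig, eventually_gt_atTop (0:ℝ)] with A hA hA0
    have h1 : (0:ℝ) < Real.exp (-κ * A ^ γ) := Real.exp_pos _
    have h2 : (0:ℝ) < A ^ (K - γ) := Real.rpow_pos_of_pos hA0 _
    have h3 : (K - γ + 1) - γ * κ * A ^ γ < 0 := by linarith
    simp only [hg', div_ne_zero_iff]
    constructor
    · exact mul_ne_zero h1.ne' (mul_ne_zero h2.ne' h3.ne)
    · positivity
  have hF0 : Tendsto F atTop (nhds 0) := by
    have h1 := MeasureTheory.intervalIntegral_tendsto_integral_Ioi 1 hint tendsto_id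
    have h2 := (tendsto_const_nhds (x := C) (f := atTop (α := ℝ))).sub h1
    simpa [← hC] using h2
  have hg0 : Tendsto g atTop (nhds 0) := by
    have := (aux_tendsto_zero γ κ (K - γ + 1) hγ hκ).div_const (γ * κ)
    simp only [zero_div] at this
    refine this.congr fun A => ?_
    simp only [hg]; ring
  have hdiv : Tendsto (fun A => (-(h A)) / g' A) atTop (nhds 1) := by
    have key : Tendsto (fun v : ℝ => v / (v - (K - γ + 1))) atTop (nhds 1) := by
      have h0 : Tendsto (fun v : ℝ => (K - γ + 1) / (v - (K - γ + 1))) atTop (nhds 0) :=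
        tendsto_const_nhds.div_atTop (tendsto_atTop_add_const_right _ _ tendsto_id)
      have h1 : Tendsto (fun v : ℝ => 1 + (K - γ + 1) / (v - (K - γ + 1))) atTop (nhds (1 + 0)) :=
        tendsto_const_nhds.add h0
      rw [add_zero] at h1
      refine h1.congr' ?_
      filter_upwards [eventually_gt_atTop (K - γ + 1 + 1)] with v hv
      have hne : v - (K - γ + 1) ≠ 0 := by intro hc; linarith
      field_simp
      ring
    have hcomp : Tendsto (fun A : ℝ => γ * κ * A ^ γ / (γ * κ * A ^ γ - (K - γ + 1)))
        atTop (nhds 1) :=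
      key.comp ((tendsto_rpow_atTop hγ).const_mul_atTop (by positivity))
    refine hcomp.congr' ?_
    filter_upwards [hbig, eventually_gt_atTop (0:ℝ)] with A hA hA0
    have h1 : (0:ℝ) < Real.exp (-κ * A ^ γ) := Real.exp_pos _
    have h2 : (0:ℝ) < A ^ (K - γ) := Real.rpow_pos_of_pos hA0 _
    have e1 : A ^ K = A ^ (K - γ) * A ^ γ := by
      rw [← Real.rpow_add hA0]; congr 1; ring
    have h3 : γ * κ * A ^ γ - (K - γ + 1) ≠ 0 := by
      intro hc; nlinarith
    have h4 : (K - γ + 1) - γ * κ * A ^ γ ≠ 0 := by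
      intro hc; apply h3; linarith
    simp only [hh, hg']
    rw [e1]
    field_simp
    ring
  have hFg : Tendsto (fun A => F A / g A) atTop (nhds 1) := by
    refine HasDerivAt.lhopital_zero_atTop ?_ ?_ hg'ne hF0 hg0 hdiv
    · filter_upwards [eventually_gt_atTop (1:ℝ)] with A hA using hFderiv A hA
    · filter_upwards [eventually_gt_atTop (0:ℝ)] with A hA using hgderiv A hA
  refine hFg.congr' ?_
  filter_upwards [eventually_gt_atTop (1:ℝ)] with A hA
  have hsplit : C = (∫ t in (1:ℝ)..A, h t) + ∫ x in Ioi A, h x := by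
    rw [intervalIntegral.integral_of_le hA.le, hC,
      ← setIntegral_union (Set.Ioc_disjoint_Ioi le_rfl) measurableSet_Ioi
        (hint.mono_set Ioc_subset_Ioi_self)
        (hint.mono_set (Ioi_subset_Ioi hA.le)),
      Set.Ioc_union_Ioi_eq_Ioi hA.le]
  have hFA : F A = ∫ x in Ioi A, h x := by
    simp only [hF]; linarith [hsplit]
  rw [hFA]
end

section
/- Let 0 < a < M with a² < M², r₊ = M + √(M²−a²), r₋ = M − √(M²−a²), Δ(r) = (r−r₊)(r−r₋), and let r_mod be a primitive of a/Δ on (r₋,r₊). Fix m ∈ ℤ and rᵦ ∈ (r₋,r₊). Then for r ∈ [rᵦ, r₊), the function v₂(r) = ∫_{rᵦ}^{r} Δ(r')^{−3} e^{−2im·r_mod(r')} dr' satisfies v₂(r) = −Δ(r)^{−2} e^{−2im·r_mod(r)} / (4(r₊−M) + 2iam) + O((r₊−r)^{−1}) as r → r₊. -/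
open MeasureTheory


private lemma aux_norm (u v d : ℝ) (hu : u ≠ 0) (hv : v ≠ 0) (hd : d ≠ 0) :
    4 * (u * ((u * v) ^ 3)⁻¹ * 1) / d = 4 / (v ^ 3 * d) * (u ^ 2)⁻¹ := by
  field_simp

private lemma aux_alg (A E denom : ℂ) (x rp rm M a : ℝ) (m : ℤ) (hA : A ≠ 0)
    (hd : denom ≠ 0) (hM : (rm:ℂ) = 2*M - rp)
    (hden : denom = 4*((rp:ℂ)-M) + 2*Complex.I*a*m) :
    (A^3)⁻¹ * E - 4 * (((rp:ℂ)-x) * (A^3)⁻¹ * E)/denom =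
    (-((-2:ℂ) * (A^3)⁻¹ * (((x:ℂ)-rm) + ((x:ℂ)-rp))) * E +
      -(A^2)⁻¹ * (E * (-2*Complex.I*m*((a:ℂ)/A)))) / denom := by
  field_simp
  rw [hden, hM]
  ring

set_option maxHeartbeats 1000000 in
theorem stmt_3 (a M : ℝ) (ha : 0 < |a|) (haM : |a| < M) (m : ℤ)
    (rp rm : ℝ) (hrp : rp = M + Real.sqrt (M ^ 2 - a ^ 2))
    (hrm : rm = M - Real.sqrt (M ^ 2 - a ^ 2))
    (Δ : ℝ → ℝ) (hΔ : ∀ r, Δ r = (r - rp) * (r - rm))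
    (rmod : ℝ → ℝ) (hrmod : ∀ r ∈ Set.Ioo rm rp, HasDerivAt rmod (a / Δ r) r)
    (rb : ℝ) (hrb : rb ∈ Set.Ioo rm rp) :
    ∃ C > (0:ℝ), ∃ ε > (0:ℝ), ∀ r : ℝ, rb ≤ r → rp - ε < r → r < rp →
      ‖(∫ r' in rb..r, ((Δ r' : ℂ)) ^ (-3 : ℤ) *
            Complex.exp (-2 * Complex.I * m * rmod r')) -
          (-(((Δ r : ℂ)) ^ (-2 : ℤ)) * Complex.exp (-2 * Complex.I * m * rmod r) /
            (4 * ((rp : ℂ) - M) + 2 * Complex.I * a * m))‖ ≤ C * (rp - r)⁻¹ := by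
  have hMa : 0 < M ^ 2 - a ^ 2 := by nlinarith [sq_abs a, abs_nonneg a]
  have hs : 0 < Real.sqrt (M ^ 2 - a ^ 2) := Real.sqrt_pos.mpr hMa
  have hrmp : rm < rp := by rw [hrp, hrm]; linarith
  obtain ⟨hrbm, hrbp⟩ := hrb
  have hsum : rp + rm = 2 * M := by rw [hrp, hrm]; ring
  set denom : ℂ := 4 * ((rp : ℂ) - M) + 2 * Complex.I * a * m with hden
  have hdre : denom.re = 4 * (rp - M) := by
    simp [hden, Complex.add_re, Complex.mul_re, Complex.I_re, Complex.I_im]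
  have hdenom : denom ≠ 0 := by
    intro h
    have h0 : denom.re = 0 := by rw [h]; simp
    rw [hdre] at h0
    have : rp = M := by linarith
    rw [hrp] at this; linarith
  set e : ℝ → ℂ := fun x => Complex.exp (-2 * Complex.I * m * rmod x) with he
  set Dc : ℝ → ℂ := fun x => ((x : ℂ) - rp) * ((x : ℂ) - rm) with hDcdef
  have hDc : ∀ x, ((Δ x : ℂ)) = Dc x := by
    intro x; rw [hΔ, hDcdef]; push_cast; ring
  have hDcne : ∀ x ∈ Set.Ioo rm rp, Dc x ≠ 0 := by
    intro x hx
    have h1 : (x : ℂ) - rp ≠ 0 := by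
      simp only [sub_ne_zero]; exact_mod_cast ne_of_lt hx.2
    have h2 : (x : ℂ) - rm ≠ 0 := by
      simp only [sub_ne_zero]; exact_mod_cast ne_of_gt hx.1
    exact mul_ne_zero h1 h2
  have hΔne : ∀ x ∈ Set.Ioo rm rp, Δ x ≠ 0 := by
    intro x hx h0
    exact hDcne x hx (by rw [← hDc, h0]; simp)
  have hnorme : ∀ x, ‖e x‖ = 1 := by
    intro x
    rw [he]
    simp only [Complex.norm_exp]
    have : (-2 * Complex.I * (m : ℂ) * ((rmod x : ℝ) : ℂ)).re = 0 := by
      simp [Complex.mul_re, Complex.I_re, Complex.I_im]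
    rw [this, Real.exp_zero]
  set F : ℝ → ℂ := fun x => -(Dc x) ^ (-2 : ℤ) * e x / denom with hF
  set f : ℝ → ℂ := fun x => (Dc x) ^ (-3 : ℤ) * e x with hf
  set g : ℝ → ℂ := fun x => 4 * (((rp : ℂ) - x) * (Dc x) ^ (-3 : ℤ) * e x) / denom with hg
  have hz2 : ∀ z : ℂ, z ^ (-2 : ℤ) = (z ^ 2)⁻¹ := fun z => by
    rw [zpow_neg]; norm_cast
  have hz3 : ∀ z : ℂ, z ^ (-3 : ℤ) = (z ^ 3)⁻¹ := fun z => by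
    rw [zpow_neg]; norm_cast
  have hz3r : ∀ z : ℝ, z ^ (-3 : ℤ) = (z ^ 3)⁻¹ := fun z => by
    rw [zpow_neg]; norm_cast
  -- key derivative computation
  have hFder : ∀ x ∈ Set.Ioo rm rp, HasDerivAt F (f x - g x) x := by
    intro x hx
    have hne := hDcne x hx
    have hΔx := hΔne x hx
    have hx1 : HasDerivAt (fun y : ℝ => ((y : ℂ))) 1 x := by
      simpa using (hasDerivAt_id x).ofReal_comp
    have hDd : HasDerivAt Dc (((x : ℂ) - rm) + ((x : ℂ) - rp)) x := by
      have h := ((hx1.sub_const (rp : ℂ)).mul (hx1.sub_const (rm : ℂ)))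
      rw [hDcdef]
      convert h using 1
      rfl
      rfl
      ring
    have hpow : HasDerivAt (fun y => (Dc y) ^ (-2 : ℤ))
        ((-2 : ℂ) * (Dc x) ^ (-3 : ℤ) * (((x : ℂ) - rm) + ((x : ℂ) - rp))) x := by
      have hz := hasDerivAt_zpow (-2) (Dc x) (Or.inl hne)
      have h := hz.comp x hDd
      convert h using 1
      rfl
      rfl
      rw [show (-2:ℤ) - 1 = -3 by norm_num]; push_cast; ring
    have hrd : HasDerivAt (fun y : ℝ => ((rmod y : ℂ))) ((a / Δ x : ℝ) : ℂ) x :=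
      (hrmod x hx).ofReal_comp
    have hexp : HasDerivAt e (e x * (-2 * Complex.I * m * ((a / Δ x : ℝ) : ℂ))) x := by
      have h1 : HasDerivAt (fun y : ℝ => -2 * Complex.I * (m : ℂ) * ((rmod y : ℝ) : ℂ))
          (-2 * Complex.I * (m : ℂ) * ((a / Δ x : ℝ) : ℂ)) x := hrd.const_mul _
      exact h1.cexp
    have hFd := (((hpow.neg).mul hexp).div_const denom)
    have hgoal : HasDerivAt F
        ((-((-2 : ℂ) * (Dc x) ^ (-3 : ℤ) * (((x : ℂ) - rm) + ((x : ℂ) - rp))) * e x +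
          -(Dc x) ^ (-2 : ℤ) * (e x * (-2 * Complex.I * m * ((a / Δ x : ℝ) : ℂ)))) / denom) x := by
      rw [hF]; exact hFd
    convert hgoal using 1
    have hcast : ((a / Δ x : ℝ) : ℂ) = (a : ℂ) / Dc x := by
      push_cast; rw [hDc]
    have hsum' : (rp : ℂ) + (rm : ℂ) = 2 * (M : ℂ) := by exact_mod_cast congrArg Complex.ofReal hsum
    have hM' : (rm : ℂ) = 2 * M - rp := by linear_combination hsum'
    simp only [hf, hg, hz2, hz3]
    rw [hcast]
    exact aux_alg (Dc x) (e x) denom x rp rm M a m hne hdenom hM' hden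
  -- constants
  set K : ℝ := 4 / ((rb - rm) ^ 3 * ‖denom‖) with hK
  have hrbrm : 0 < rb - rm := by linarith
  have hdn : 0 < ‖denom‖ := norm_pos_iff.mpr hdenom
  have hKpos : 0 < K := by positivity
  have hC : 0 < K + ‖F rb‖ * (rp - rb) + 1 := by
    have := mul_nonneg (norm_nonneg (F rb)) (by linarith : (0:ℝ) ≤ rp - rb)
    linarith
  refine ⟨K + ‖F rb‖ * (rp - rb) + 1, hC, rp - rb, by linarith, ?_⟩
  intro r hrbr _ hrrp
  have h0r : 0 < rp - r := by linarith
  have h0b : 0 < rp - rb := by linarith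
  have hsub : Set.Icc rb r ⊆ Set.Ioo rm rp := fun x hx =>
    ⟨lt_of_lt_of_le hrbm hx.1, lt_of_le_of_lt hx.2 hrrp⟩
  have huIcc : Set.uIcc rb r = Set.Icc rb r := Set.uIcc_of_le hrbr
  -- continuity facts
  have hDccont : ContinuousOn Dc (Set.Icc rb r) := by
    rw [hDcdef]; fun_prop
  have hrmc : ContinuousOn rmod (Set.Icc rb r) := by
    intro x hx
    exact ((hrmod x (hsub hx)).continuousAt).continuousWithinAt
  have hec : ContinuousOn e (Set.Icc rb r) := by
    rw [he]
    apply ContinuousOn.cexp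
    exact continuousOn_const.mul (Complex.continuous_ofReal.comp_continuousOn hrmc)
  have hpowc3 : ContinuousOn (fun x => (Dc x) ^ (-3 : ℤ)) (Set.Icc rb r) :=
    hDccont.zpow₀ _ (fun x hx => Or.inl (hDcne x (hsub hx)))
  have hfc : ContinuousOn f (Set.Icc rb r) := by
    rw [hf]; exact hpowc3.mul hec
  have hgc : ContinuousOn g (Set.Icc rb r) := by
    rw [hg]
    apply ContinuousOn.div_const
    apply ContinuousOn.mul continuousOn_const
    exact ((continuousOn_const.sub (Complex.continuous_ofReal.continuousOn)).mul hpowc3).mul hec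
  have hfint : IntervalIntegrable f volume rb r :=
    (hfc.mono (by rw [huIcc])).intervalIntegrable
  have hgint : IntervalIntegrable g volume rb r :=
    (hgc.mono (by rw [huIcc])).intervalIntegrable
  have hFTC : ∫ x in rb..r, (f x - g x) = F r - F rb := by
    apply intervalIntegral.integral_eq_sub_of_hasDerivAt
    · intro x hx
      exact hFder x (hsub (huIcc ▸ hx))
    · exact hfint.sub hgint
  have hsplit : ∫ x in rb..r, f x = (F r - F rb) + ∫ x in rb..r, g x := by
    rw [← hFTC, ← intervalIntegral.integral_add (hfint.sub hgint) hgint]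
    congr 1; funext x; ring
  -- rewrite the goal
  have h1 : (∫ r' in rb..r, ((Δ r' : ℂ)) ^ (-3 : ℤ) *
      Complex.exp (-2 * Complex.I * m * rmod r')) = ∫ x in rb..r, f x := by
    congr 1; funext x; rw [hf]; simp only [hDc x, he]
  have h2 : (-(((Δ r : ℂ)) ^ (-2 : ℤ)) * Complex.exp (-2 * Complex.I * m * rmod r) / denom)
      = F r := by
    rw [hF]; simp only [hDc r, he]
  rw [h1, h2, hsplit, show F r - F rb + (∫ x in rb..r, g x) - F r
      = (∫ x in rb..r, g x) - F rb by ring]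
  -- bound ‖g‖ pointwise
  have hgbound : ∀ t ∈ Set.Ioc rb r, ‖g t‖ ≤ K * ((rp - t) ^ 2)⁻¹ := by
    intro t ht
    have ht' : t ∈ Set.Ioo rm rp := ⟨lt_trans hrbm ht.1, lt_of_le_of_lt ht.2 hrrp⟩
    have h1' : 0 < rp - t := by linarith [ht'.2]
    have h2' : 0 < t - rm := by linarith [ht'.1]
    have h3' : rb - rm ≤ t - rm := by linarith [ht.1]
    have hnDc : ‖Dc t‖ = (rp - t) * (t - rm) := by
      rw [hDcdef]
      simp only [norm_mul]
      rw [show ((t:ℂ) - (rp:ℂ)) = ((t - rp : ℝ) : ℂ) by push_cast; ring,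
          show ((t:ℂ) - (rm:ℂ)) = ((t - rm : ℝ) : ℂ) by push_cast; ring,
          Complex.norm_real, Complex.norm_real]
      rw [Real.norm_eq_abs, Real.norm_eq_abs, abs_of_neg (by linarith), abs_of_pos h2']
      ring
    have hgt : ‖g t‖ = 4 / ((t - rm) ^ 3 * ‖denom‖) * ((rp - t) ^ 2)⁻¹ := by
      have h4 : ‖(4:ℂ)‖ = 4 := by norm_num
      rw [hg, norm_div, norm_mul, norm_mul, norm_mul, norm_zpow, hnorme t, hnDc, h4,
          show ((rp:ℂ) - (t:ℂ)) = ((rp - t : ℝ) : ℂ) by push_cast; ring, Complex.norm_real,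
          Real.norm_eq_abs, abs_of_pos h1', hz3r]
      exact aux_norm _ _ _ (ne_of_gt h1') (ne_of_gt h2') hdn.ne'
    rw [hgt, hK]
    have hmono : ((t - rm) ^ 3 * ‖denom‖)⁻¹ ≤ ((rb - rm) ^ 3 * ‖denom‖)⁻¹ := by
      apply inv_anti₀ (by positivity)
      apply mul_le_mul_of_nonneg_right _ hdn.le
      gcongr
    rw [div_eq_mul_inv, div_eq_mul_inv]
    exact mul_le_mul_of_nonneg_right
      (mul_le_mul_of_nonneg_left hmono (by norm_num)) (by positivity)
  -- integrate the bound
  have hGcont : ContinuousOn (fun t => K * ((rp - t) ^ 2)⁻¹) (Set.Icc rb r) := by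
    apply ContinuousOn.mul continuousOn_const
    apply ContinuousOn.inv₀
    · fun_prop
    · intro x hx
      exact pow_ne_zero _ (sub_ne_zero.mpr (ne_of_gt (lt_of_le_of_lt hx.2 hrrp)))
  have hGint : IntervalIntegrable (fun t => K * ((rp - t) ^ 2)⁻¹) volume rb r :=
    (hGcont.mono (by rw [huIcc])).intervalIntegrable
  have hGval : ∫ t in rb..r, K * ((rp - t) ^ 2)⁻¹ = K * (rp - r)⁻¹ - K * (rp - rb)⁻¹ := by
    apply intervalIntegral.integral_eq_sub_of_hasDerivAt
    · intro x hx
      rw [huIcc] at hx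
      have hxr : x < rp := lt_of_le_of_lt hx.2 hrrp
      have hne : rp - x ≠ 0 := sub_ne_zero.mpr (ne_of_gt hxr)
      have hd1 : HasDerivAt (fun t : ℝ => rp - t) (-1) x := by
        simpa using (hasDerivAt_id x).const_sub rp
      have hd2 := (hd1.inv hne).const_mul K
      convert hd2 using 1
      rfl
      rfl
      ring
    · exact hGint
  have hnormg : ‖∫ t in rb..r, g t‖ ≤ K * (rp - r)⁻¹ - K * (rp - rb)⁻¹ := by
    have hae : ∀ᵐ t ∂(volume.restrict (Set.uIoc rb r)), ‖g t‖ ≤ K * ((rp - t) ^ 2)⁻¹ := by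
      rw [Set.uIoc_of_le hrbr]
      exact (ae_restrict_iff' measurableSet_Ioc).2 (Filter.Eventually.of_forall hgbound)
    have hb := intervalIntegral.norm_integral_le_abs_of_norm_le hae hGint
    rw [hGval] at hb
    refine hb.trans (le_of_eq (abs_of_nonneg ?_))
    have hii : (rp - rb)⁻¹ ≤ (rp - r)⁻¹ := by
      apply inv_anti₀ h0r; linarith
    nlinarith
  -- final estimate
  have hii : (rp - rb)⁻¹ ≤ (rp - r)⁻¹ := by
    apply inv_anti₀ h0r; linarith
  have hcc : (rp - rb) * (rp - rb)⁻¹ = 1 := mul_inv_cancel₀ (ne_of_gt h0b)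
  have hFn : 0 ≤ ‖F rb‖ := norm_nonneg _
  have hip : 0 < (rp - r)⁻¹ := inv_pos.mpr h0r
  have hib : 0 < (rp - rb)⁻¹ := inv_pos.mpr h0b
  have key : ‖F rb‖ ≤ ‖F rb‖ * (rp - rb) * (rp - r)⁻¹ := by
    calc ‖F rb‖ = ‖F rb‖ * ((rp - rb) * (rp - rb)⁻¹) := by rw [hcc, mul_one]
      _ ≤ ‖F rb‖ * ((rp - rb) * (rp - r)⁻¹) := by
          apply mul_le_mul_of_nonneg_left _ hFn
          exact mul_le_mul_of_nonneg_left hii h0b.le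
      _ = ‖F rb‖ * (rp - rb) * (rp - r)⁻¹ := by ring
  calc ‖(∫ x in rb..r, g x) - F rb‖ ≤ ‖∫ x in rb..r, g x‖ + ‖F rb‖ := norm_sub_le _ _
    _ ≤ (K * (rp - r)⁻¹ - K * (rp - rb)⁻¹) + ‖F rb‖ := by linarith
    _ ≤ (K + ‖F rb‖ * (rp - rb) + 1) * (rp - r)⁻¹ := by
        nlinarith [mul_nonneg hKpos.le hib.le]
end

section
/- Let Δ(r) = (r−r₊)(r−r₋) with r₋ < r₊ and M = (r₊+r₋)/2, let a ∈ ℝ, m ∈ ℤ, and let r_mod be a primitive of a/Δ on (r₋,r₊). If v : (r₋,r₊) → ℂ is twice differentiable and satisfies the ODE Δ v'' + (2iam + 6(r−M)) v' + λ v = 0 for a constant λ ∈ ℂ, then the function v̂(r) := v(r) Δ(r)² e^{2im·r_mod(r)} satisfies Δ v̂'' − (2iam + 2(r−M)) v̂' + (λ − 4) v̂ = 0 on (r₋,r₊). -/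
theorem stmt_4 (rm rp a : ℝ) (hlt : rm < rp) (m : ℤ) (lam : ℂ)
    (M : ℝ) (hM : M = (rp + rm) / 2)
    (Δ : ℝ → ℝ) (hΔ : ∀ r, Δ r = (r - rp) * (r - rm))
    (rmod : ℝ → ℝ) (hrmod : ∀ r ∈ Set.Ioo rm rp, HasDerivAt rmod (a / Δ r) r)
    (v : ℝ → ℂ)
    (hv1 : ∀ r ∈ Set.Ioo rm rp, DifferentiableAt ℝ v r)
    (hv2 : ∀ r ∈ Set.Ioo rm rp, DifferentiableAt ℝ (deriv v) r)
    (hODE : ∀ r ∈ Set.Ioo rm rp,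
      (Δ r : ℂ) * deriv (deriv v) r + (2 * Complex.I * a * m + 6 * ((r : ℂ) - M)) * deriv v r
        + lam * v r = 0) :
    ∀ r ∈ Set.Ioo rm rp,
      (Δ r : ℂ) * deriv (deriv (fun x : ℝ =>
          v x * (Δ x : ℂ) ^ 2 * Complex.exp (2 * Complex.I * m * rmod x))) r
        - (2 * Complex.I * a * m + 2 * ((r : ℂ) - M)) *
          deriv (fun x : ℝ =>
            v x * (Δ x : ℂ) ^ 2 * Complex.exp (2 * Complex.I * m * rmod x)) r
        + (lam - 4) * (v r * (Δ r : ℂ) ^ 2 * Complex.exp (2 * Complex.I * m * rmod r)) = 0 := by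
  -- notation
  set E : ℝ → ℂ := fun x => Complex.exp (2 * Complex.I * m * rmod x) with hE
  set g : ℝ → ℂ := fun x =>
    deriv v x * (Δ x : ℂ) ^ 2 + (4 * ((x : ℂ) - M) + 2 * Complex.I * a * m) * (Δ x : ℂ) * v x
    with hg
  have hΔne : ∀ x ∈ Set.Ioo rm rp, Δ x ≠ 0 := by
    intro x hx
    rw [hΔ]
    have h1 : x - rp < 0 := by linarith [hx.2]
    have h2 : x - rm > 0 := by linarith [hx.1]
    exact mul_ne_zero (ne_of_lt h1) (ne_of_gt h2)
  have hΔd : ∀ x : ℝ, HasDerivAt Δ (2 * (x - M)) x := by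
    intro x
    have : HasDerivAt (fun y : ℝ => (y - rp) * (y - rm)) (1 * (x - rm) + (x - rp) * 1) x :=
      (((hasDerivAt_id x).sub_const rp).mul ((hasDerivAt_id x).sub_const rm))
    have h2 : (fun y : ℝ => (y - rp) * (y - rm)) = Δ := by
      funext y; rw [hΔ]
    rw [h2] at this
    convert this using 1
    rw [hM]; ring
  have hΔC : ∀ x : ℝ, HasDerivAt (fun y : ℝ => (Δ y : ℂ)) ((2 * (x - M) : ℝ) : ℂ) x :=
    fun x => (hΔd x).ofReal_comp
  have hEd : ∀ x ∈ Set.Ioo rm rp,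
      HasDerivAt E (E x * (2 * Complex.I * m * (a / Δ x : ℝ))) x := by
    intro x hx
    have h1 : HasDerivAt (fun y : ℝ => 2 * Complex.I * m * (rmod y : ℂ))
        (2 * Complex.I * m * (a / Δ x : ℝ)) x :=
      ((hrmod x hx).ofReal_comp).const_mul (2 * Complex.I * m)
    have := h1.cexp
    simpa [hE, mul_comm] using this
  -- first derivative of w
  have hw : ∀ x ∈ Set.Ioo rm rp,
      HasDerivAt (fun y : ℝ => v y * (Δ y : ℂ) ^ 2 * E y) (E x * g x) x := by
    intro x hx
    have hvx := (hv1 x hx).hasDerivAt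
    have hΔ2 : HasDerivAt (fun y : ℝ => (Δ y : ℂ) ^ 2)
        (2 * (Δ x : ℂ) ^ 1 * ((2 * (x - M) : ℝ) : ℂ)) x := by
      have h0 := (hΔC x).mul (hΔC x)
      simp only [pow_two]
      convert h0 using 1
      · rfl
      · rfl
      push_cast; ring
    have h := (hvx.mul hΔ2).mul (hEd x hx)
    convert h using 1
    · rfl
    · rfl
    have hne : (Δ x : ℂ) ≠ 0 := by
      exact_mod_cast Complex.ofReal_ne_zero.mpr (hΔne x hx)
    rw [hg]
    push_cast
    simp only [Pi.mul_apply]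
    field_simp
    ring
  -- deriv of w equals E*g on the open interval
  have hderiv : ∀ x ∈ Set.Ioo rm rp,
      deriv (fun y : ℝ => v y * (Δ y : ℂ) ^ 2 * E y) x = E x * g x :=
    fun x hx => (hw x hx).deriv
  intro r hr
  have hne : (Δ r : ℂ) ≠ 0 := by
    exact_mod_cast Complex.ofReal_ne_zero.mpr (hΔne r hr)
  -- derivative of g at r
  have hg' : HasDerivAt g
      (deriv (deriv v) r * (Δ r : ℂ) ^ 2
        + deriv v r * (2 * (Δ r : ℂ) ^ 1 * ((2 * (r - M) : ℝ) : ℂ))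
        + ((4 * ((4 : ℂ)⁻¹ * 4) * 1) * (Δ r : ℂ)
            + (4 * ((r : ℂ) - M) + 2 * Complex.I * a * m) * ((2 * (r - M) : ℝ) : ℂ)) * v r
        + (4 * ((r : ℂ) - M) + 2 * Complex.I * a * m) * (Δ r : ℂ) * deriv v r) r := by
    have h1 : HasDerivAt (fun y : ℝ => deriv v y * (Δ y : ℂ) ^ 2)
        (deriv (deriv v) r * (Δ r : ℂ) ^ 2
          + deriv v r * (2 * (Δ r : ℂ) ^ 1 * ((2 * (r - M) : ℝ) : ℂ))) r := by
      have hΔ2 : HasDerivAt (fun y : ℝ => (Δ y : ℂ) ^ 2)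
          (2 * (Δ r : ℂ) ^ 1 * ((2 * (r - M) : ℝ) : ℂ)) r := by
        have h0 := (hΔC r).mul (hΔC r)
        simp only [pow_two]
        convert h0 using 1
        · rfl
        · rfl
        push_cast; ring
      exact (hv2 r hr).hasDerivAt.mul hΔ2
    have hcoeff : HasDerivAt (fun y : ℝ => 4 * ((y : ℂ) - M) + 2 * Complex.I * a * m)
        (4 : ℂ) r := by
      have : HasDerivAt (fun y : ℝ => ((y : ℝ) : ℂ)) 1 r := (hasDerivAt_id r).ofReal_comp
      simpa using (((this.sub_const (M : ℂ)).const_mul (4 : ℂ)).add_const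
        (2 * Complex.I * a * m))
    have h2 : HasDerivAt
        (fun y : ℝ => (4 * ((y : ℂ) - M) + 2 * Complex.I * a * m) * (Δ y : ℂ) * v y)
        (((4 : ℂ) * (Δ r : ℂ)
            + (4 * ((r : ℂ) - M) + 2 * Complex.I * a * m) * ((2 * (r - M) : ℝ) : ℂ)) * v r
          + (4 * ((r : ℂ) - M) + 2 * Complex.I * a * m) * (Δ r : ℂ) * deriv v r) r :=
      (hcoeff.mul (hΔC r)).mul (hv1 r hr).hasDerivAt
    have := h1.add h2
    rw [hg]
    convert this using 1
    · rfl
    · rfl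
    ring
  -- second derivative of w at r
  have hEg : HasDerivAt (fun x => E x * g x)
      (E r * (2 * Complex.I * m * a * (deriv v r * (Δ r : ℂ)
            + (4 * ((r : ℂ) - M) + 2 * Complex.I * a * m) * v r))
        + E r * (deriv (deriv v) r * (Δ r : ℂ) ^ 2
        + deriv v r * (2 * (Δ r : ℂ) ^ 1 * ((2 * (r - M) : ℝ) : ℂ))
        + ((4 * ((4 : ℂ)⁻¹ * 4) * 1) * (Δ r : ℂ)
            + (4 * ((r : ℂ) - M) + 2 * Complex.I * a * m) * ((2 * (r - M) : ℝ) : ℂ)) * v r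
        + (4 * ((r : ℂ) - M) + 2 * Complex.I * a * m) * (Δ r : ℂ) * deriv v r)) r := by
    have h := (hEd r hr).mul hg'
    convert h using 1
    · rfl
    · rfl
    rw [hg]
    push_cast
    field_simp
  have hww : HasDerivAt (deriv (fun y : ℝ => v y * (Δ y : ℂ) ^ 2 * E y))
      (E r * (2 * Complex.I * m * a * (deriv v r * (Δ r : ℂ)
            + (4 * ((r : ℂ) - M) + 2 * Complex.I * a * m) * v r))
        + E r * (deriv (deriv v) r * (Δ r : ℂ) ^ 2
        + deriv v r * (2 * (Δ r : ℂ) ^ 1 * ((2 * (r - M) : ℝ) : ℂ))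
        + ((4 * ((4 : ℂ)⁻¹ * 4) * 1) * (Δ r : ℂ)
            + (4 * ((r : ℂ) - M) + 2 * Complex.I * a * m) * ((2 * (r - M) : ℝ) : ℂ)) * v r
        + (4 * ((r : ℂ) - M) + 2 * Complex.I * a * m) * (Δ r : ℂ) * deriv v r)) r := by
    apply hEg.congr_of_eventuallyEq
    filter_upwards [isOpen_Ioo.mem_nhds hr] with x hx
    exact hderiv x hx
  have hw2 : deriv (deriv (fun y : ℝ => v y * (Δ y : ℂ) ^ 2 * E y)) r
      = E r * (2 * Complex.I * m * a * (deriv v r * (Δ r : ℂ)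
            + (4 * ((r : ℂ) - M) + 2 * Complex.I * a * m) * v r))
        + E r * (deriv (deriv v) r * (Δ r : ℂ) ^ 2
        + deriv v r * (2 * (Δ r : ℂ) ^ 1 * ((2 * (r - M) : ℝ) : ℂ))
        + ((4 * ((4 : ℂ)⁻¹ * 4) * 1) * (Δ r : ℂ)
            + (4 * ((r : ℂ) - M) + 2 * Complex.I * a * m) * ((2 * (r - M) : ℝ) : ℂ)) * v r
        + (4 * ((r : ℂ) - M) + 2 * Complex.I * a * m) * (Δ r : ℂ) * deriv v r) := hww.deriv
  have hw1 : deriv (fun y : ℝ => v y * (Δ y : ℂ) ^ 2 * E y) r = E r * g r := hderiv r hr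
  show (Δ r : ℂ) * deriv (deriv (fun y : ℝ => v y * (Δ y : ℂ) ^ 2 * E y)) r
        - (2 * Complex.I * a * m + 2 * ((r : ℂ) - M)) *
          deriv (fun y : ℝ => v y * (Δ y : ℂ) ^ 2 * E y) r
        + (lam - 4) * (v r * (Δ r : ℂ) ^ 2 * E r) = 0
  rw [hw1, hw2, hg]
  have hode := hODE r hr
  push_cast
  linear_combination (E r * (Δ r : ℂ) ^ 2) * hode
end

section
/- Fix ℓ ≥ 4 an integer, r₋ < r₊ real, M = (r₊+r₋)/2, Δ(r) = (r−r₊)(r−r₋), a ∈ ℝ, m ∈ ℤ, and λ_ℓ = −(ℓ−2)(ℓ+3). Define the polynomial v₁(r) = (r−r₋)^{ℓ−2} + Σ_{k=0}^{ℓ−3} (∏_{j=k}^{ℓ−3} ((j+1)((j+3)(r₊−r₋) − 2iam))/(j(j+5) − (ℓ−2)(ℓ+3))) (r−r₋)^k. Then v₁ solves the ODE Δ v₁'' + (2iam + 6(r−M)) v₁' + λ_ℓ v₁ = 0 on ℝ. -/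
theorem stmt_7 (ℓ : ℕ) (hℓ : 4 ≤ ℓ) (rm rp a : ℝ) (hlt : rm < rp) (m : ℤ)
    (M : ℝ) (hM : M = (rp + rm) / 2)
    (Δ : ℝ → ℝ) (hΔ : ∀ r, Δ r = (r - rp) * (r - rm))
    (v₁ : ℝ → ℂ)
    (hv₁ : ∀ r : ℝ, v₁ r = ((r : ℂ) - rm) ^ (ℓ - 2) +
      ∑ k ∈ Finset.range (ℓ - 2),
        (∏ j ∈ Finset.Icc k (ℓ - 3),
          ((j : ℂ) + 1) * (((j : ℂ) + 3) * ((rp : ℂ) - rm) - 2 * Complex.I * a * m) /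
            ((j : ℂ) * ((j : ℂ) + 5) - ((ℓ : ℂ) - 2) * ((ℓ : ℂ) + 3))) *
        ((r : ℂ) - rm) ^ k) :
    ∀ r : ℝ,
      (Δ r : ℂ) * deriv (deriv v₁) r
        + (2 * Complex.I * a * m + 6 * ((r : ℂ) - M)) * deriv v₁ r
        + (-(((ℓ : ℂ) - 2) * ((ℓ : ℂ) + 3))) * v₁ r = 0 := by
  set n : ℕ := ℓ - 2 with hn
  have hn2 : 2 ≤ n := by omega
  set b : ℂ := (rp : ℂ) - rm with hb
  set cc : ℂ := 2 * Complex.I * a * m with hcc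
  set lam : ℂ := -(((ℓ : ℂ) - 2) * ((ℓ : ℂ) + 3)) with hlam
  set c : ℕ → ℂ := fun k => ∏ j ∈ Finset.Icc k (ℓ - 3),
      ((j : ℂ) + 1) * (((j : ℂ) + 3) * b - cc) /
        ((j : ℂ) * ((j : ℂ) + 5) - ((ℓ : ℂ) - 2) * ((ℓ : ℂ) + 3)) with hc
  -- c n = 1 (empty product)
  have hcn : c n = 1 := by
    have hempty : Finset.Icc n (ℓ - 3) = ∅ := by
      rw [hn]; exact Finset.Icc_eq_empty (by omega)
    simp only [hc, hempty, Finset.prod_empty]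
  -- rewrite v₁ as a single sum
  have hveq : v₁ = fun r : ℝ => ∑ k ∈ Finset.range (n + 1), c k * ((r : ℂ) - rm) ^ k := by
    funext r
    rw [hv₁ r, Finset.sum_range_succ, hcn, one_mul, add_comm]
  -- first derivative
  have hpow : ∀ (k : ℕ) (r : ℝ),
      HasDerivAt (fun r : ℝ => ((r : ℂ) - rm) ^ k) ((k:ℂ) * ((r:ℂ) - rm) ^ (k-1)) r := by
    intro k r
    have h1 : HasDerivAt (fun z : ℂ => (z - rm) ^ k) ((k:ℂ) * ((r:ℂ) - rm) ^ (k-1)) (r:ℂ) := by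
      simpa using ((hasDerivAt_id (r:ℂ)).sub_const (rm:ℂ)).fun_pow k
    exact h1.comp_ofReal
  have hd1 : ∀ r : ℝ, HasDerivAt v₁
      (∑ k ∈ Finset.range (n + 1), c k * ((k:ℂ) * ((r:ℂ) - rm) ^ (k-1))) r := by
    intro r
    rw [hveq]
    exact HasDerivAt.fun_sum fun k _ => (hpow k r).const_mul (c k)
  have hdv1 : deriv v₁ = fun r : ℝ =>
      ∑ k ∈ Finset.range (n + 1), c k * ((k:ℂ) * ((r:ℂ) - rm) ^ (k-1)) :=
    funext fun r => (hd1 r).deriv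
  have hd2 : ∀ r : ℝ, HasDerivAt (deriv v₁)
      (∑ k ∈ Finset.range (n + 1),
        c k * ((k:ℂ) * (((k-1:ℕ):ℂ) * ((r:ℂ) - rm) ^ (k-1-1)))) r := by
    intro r
    rw [hdv1]
    exact HasDerivAt.fun_sum fun k _ => (((hpow (k-1) r).const_mul ((k:ℂ))).const_mul (c k))
  intro r
  rw [(hd2 r).deriv, hdv1, hveq]
  -- rewrite Δ and the 6(r-M) term
  have hΔ' : ((Δ r : ℝ) : ℂ) = (((r:ℂ) - rm) - b) * ((r:ℂ) - rm) := by
    rw [hΔ, hb]; push_cast; ring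
  have hM' : (2 * Complex.I * a * m + 6 * ((r : ℂ) - M))
      = cc + (6 * ((r:ℂ) - rm) - 3 * b) := by
    rw [hcc, hb, hM]; push_cast; ring
  rw [hΔ', hM']
  set x : ℂ := (r : ℂ) - rm with hx
  rw [Finset.mul_sum, Finset.mul_sum, Finset.mul_sum, ← Finset.sum_add_distrib,
    ← Finset.sum_add_distrib]
  -- per-term algebraic identity
  have key : ∀ k ∈ Finset.range (n+1),
      (x - b) * x * (c k * ((k:ℂ) * (((k-1:ℕ):ℂ) * x ^ (k-1-1)))) +
        (cc + (6*x - 3*b)) * (c k * ((k:ℂ) * x ^ (k-1))) + lam * (c k * x ^ k)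
      = c k * ((k:ℂ)*((k:ℂ)+5) + lam) * x ^ k
        + c k * ((k:ℂ) * (cc - ((k:ℂ)+2)*b)) * x ^ (k-1) := by
    intro k _
    match k with
    | 0 => simp; ring
    | 1 => push_cast; ring
    | (j+2) => push_cast; ring
  rw [Finset.sum_congr rfl key, Finset.sum_add_distrib, Finset.sum_range_succ,
    Finset.sum_range_succ']
  -- top coefficient vanishes
  have htop : c n * ((n:ℂ)*((n:ℂ)+5) + lam) = 0 := by
    rw [hcn, one_mul, hlam, hn]
    have : ((ℓ - 2 : ℕ) : ℂ) = (ℓ : ℂ) - 2 := by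
      push_cast [Nat.cast_sub (by omega : 2 ≤ ℓ)]; ring
    rw [this]; ring
  -- bottom coefficient of the shifted sum vanishes
  have hbot : c 0 * ((0:ℕ):ℂ) * (cc - (((0:ℕ):ℂ)+2)*b) * x ^ (0-1) = 0 := by simp
  -- recurrence
  have hrec : ∀ k, k < n →
      c k * ((k:ℂ)*((k:ℂ)+5) + lam)
        = c (k+1) * (((k:ℂ)+1) * (((k:ℂ)+3)*b - cc)) := by
    intro k hk
    have hkl : k ≤ ℓ - 3 := by omega
    have hins : Finset.Icc k (ℓ-3) = insert k (Finset.Icc (k+1) (ℓ-3)) := by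
      ext j; simp only [Finset.mem_Icc, Finset.mem_insert]; omega
    have hd : (k:ℂ) * ((k:ℂ)+5) - ((ℓ:ℂ)-2)*((ℓ:ℂ)+3) ≠ 0 := by
      have h1 : ((ℓ - 2 : ℕ) : ℂ) = (ℓ:ℂ) - 2 := by
        push_cast [Nat.cast_sub (by omega : 2 ≤ ℓ)]; ring
      have h2 : ((ℓ + 3 : ℕ) : ℂ) = (ℓ:ℂ) + 3 := by push_cast; ring
      have hlt2 : k * (k+5) < (ℓ-2) * (ℓ+3) := by
        have : k * (k+5) ≤ (ℓ-3) * (ℓ-3+5) := Nat.mul_le_mul hkl (by omega)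
        have h3 : (ℓ-3) * (ℓ-3+5) < (ℓ-2) * (ℓ+3) := by
          have h4 : ℓ - 3 + 2 = ℓ - 1 := by omega
          nlinarith [Nat.sub_add_cancel (by omega : 3 ≤ ℓ), Nat.sub_add_cancel (by omega : 2 ≤ ℓ)]
        omega
      rw [← h1, ← h2, sub_ne_zero]
      intro hEq
      have hEq2 : ((k * (k+5) : ℕ) : ℂ) = (((ℓ-2) * (ℓ+3) : ℕ) : ℂ) := by
        push_cast at hEq ⊢; exact hEq
      have := Nat.cast_inj.mp hEq2
      omega
    have hsplit : c k = ((k:ℂ) + 1) * (((k:ℂ) + 3) * b - cc) /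
        ((k:ℂ) * ((k:ℂ) + 5) - ((ℓ:ℂ) - 2) * ((ℓ:ℂ) + 3)) * c (k+1) := by
      simp only [hc]
      rw [hins, Finset.prod_insert (by simp)]
    rw [hsplit, hlam]
    field_simp
    ring
  -- combine
  have hshift : ∀ k ∈ Finset.range n,
      c (k+1) * (((k+1:ℕ):ℂ) * (cc - (((k+1:ℕ):ℂ)+2)*b)) * x ^ (k+1-1)
      = - (c k * ((k:ℂ)*((k:ℂ)+5) + lam) * x ^ k) := by
    intro k hk
    have hk' : k < n := Finset.mem_range.mp hk
    rw [hrec k hk']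
    push_cast
    ring
  rw [Finset.sum_congr rfl hshift]
  rw [htop]
  simp [Finset.sum_neg_distrib]
end

section
/- With the notation of the previous statement (v₁ the polynomial solution of Δ v'' + (2iam+6(r−M))v' + λ_ℓ v = 0 with λ_ℓ = −(ℓ−2)(ℓ+3), ℓ ≥ 4), one has the reflection symmetry v₁(2M − r) = (−1)^{ℓ−2} · conj(v₁(r)) for all r ∈ [r₋, r₊]. In particular v₁(r₊) = (−1)^{ℓ−2} conj(v₁(r₋)) ≠ 0. -/
open Finset


lemma natA (i k : ℕ) : (i+1) * Nat.choose (i+1+k) (i+1) = (i+k+1) * Nat.choose (i+k) i := by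
  have h := Nat.add_one_mul_choose_eq (i+k) i
  have e : i + 1 + k = i + k + 1 := by omega
  rw [e]
  simpa [Nat.succ_eq_add_one, mul_comm] using h.symm

lemma natB (i k : ℕ) : (i+k+1) * Nat.choose (i+k) i = (k+1) * Nat.choose (i+k+1) i := by
  have h := Nat.add_one_mul_choose_eq (i+k) k
  have h1 : Nat.choose (i+k) k = Nat.choose (i+k) i := by
    rw [← Nat.choose_symm (Nat.le_add_left k i)]
    congr 1
    omega
  have h2 : Nat.choose (i+k+1) (k+1) = Nat.choose (i+k+1) i := by
    rw [← Nat.choose_symm (by omega : k+1 ≤ i+k+1)]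
    congr 1
    omega
  rw [h1, h2] at h
  simpa [Nat.succ_eq_add_one, mul_comm] using h

noncomputable def Wc (n k : ℕ) : ℂ := (k:ℂ)*((k:ℂ)+5) - (n:ℂ)*((n:ℂ)+5)

lemma Wc_self (n : ℕ) : Wc n n = 0 := by simp [Wc]

lemma lemR (n : ℕ) (s β : ℂ) (v : ℕ → ℂ)
    (hv : ∀ k < n, Wc n k * v k = ((k:ℂ)+1)*(((k:ℂ)+3)*s + β) * v (k+1))
    (i m : ℕ) (h : i + m + 1 = n) :
    Wc n i * (∑ k ∈ range (m+2), (Nat.choose (i+k) i : ℂ) * s^k * v (i+k))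
      + ((i:ℂ)+1)*(((i:ℂ)+3)*s - β) * (∑ k ∈ range (m+1), (Nat.choose (i+1+k) (i+1) : ℂ) * s^k * v (i+1+k)) = 0 := by
  have hidx : ∀ k : ℕ, i+1+k = i+k+1 := fun k => by omega
  simp only [hidx]
  have hG : (∑ k ∈ range (m+2), (Nat.choose (i+k) i : ℂ) * (Wc n (i+k) - Wc n i) * s^k * v (i+k))
      = (∑ k ∈ range (m+1), (Nat.choose (i+k+1) i : ℂ) * ((k:ℂ)+1) * (2*(i:ℂ)+(k:ℂ)+6) * s^(k+1) * v (i+k+1)) := by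
    rw [Finset.sum_range_succ']
    have h0 : (Nat.choose (i+0) i : ℂ) * (Wc n (i+0) - Wc n i) * s^0 * v (i+0) = 0 := by
      simp
    rw [h0, add_zero]
    apply Finset.sum_congr rfl
    intro k _
    simp only [← add_assoc]
    have hW : Wc n (i+k+1) - Wc n i = ((k:ℂ)+1) * (2*(i:ℂ)+(k:ℂ)+6) := by
      simp only [Wc]
      push_cast
      ring
    rw [hW]
    ring
  have h1 : Wc n i * (∑ k ∈ range (m+2), (Nat.choose (i+k) i : ℂ) * s^k * v (i+k))
      = (∑ k ∈ range (m+2), (Nat.choose (i+k) i : ℂ) * Wc n (i+k) * s^k * v (i+k))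
        - (∑ k ∈ range (m+1), (Nat.choose (i+k+1) i : ℂ) * ((k:ℂ)+1) * (2*(i:ℂ)+(k:ℂ)+6) * s^(k+1) * v (i+k+1)) := by
    rw [← hG, Finset.mul_sum, ← Finset.sum_sub_distrib]
    exact Finset.sum_congr rfl (fun k _ => by ring)
  have h2 : ((i:ℂ)+1)*(((i:ℂ)+3)*s - β) * (∑ k ∈ range (m+1), (Nat.choose (i+k+1) (i+1) : ℂ) * s^k * v (i+k+1))
      = (∑ k ∈ range (m+1), (Nat.choose (i+k+1) i : ℂ) * ((k:ℂ)+1) * (2*(i:ℂ)+(k:ℂ)+6) * s^(k+1) * v (i+k+1))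
        - (∑ k ∈ range (m+1), (Nat.choose (i+k) i : ℂ) * Wc n (i+k) * s^k * v (i+k)) := by
    rw [Finset.mul_sum, ← Finset.sum_sub_distrib]
    apply Finset.sum_congr rfl
    intro k hk
    have hkm : k < m + 1 := by simpa using hk
    have hrec := hv (i+k) (by omega)
    have hA : ((i:ℂ)+1) * (Nat.choose (i+k+1) (i+1) : ℂ) = ((i:ℂ)+(k:ℂ)+1) * (Nat.choose (i+k) i : ℂ) := by
      have := natA i k
      rw [hidx k] at this
      exact_mod_cast this
    have hB : ((i:ℂ)+(k:ℂ)+1) * (Nat.choose (i+k) i : ℂ) = ((k:ℂ)+1) * (Nat.choose (i+k+1) i : ℂ) := by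
      exact_mod_cast natB i k
    have hWik : Wc n (i+k) = ((i:ℂ)+(k:ℂ))*((i:ℂ)+(k:ℂ)+5) - (n:ℂ)*((n:ℂ)+5) := by
      simp only [Wc]; push_cast; ring
    have hrec' : Wc n (i+k) * v (i+k)
        = ((i:ℂ)+(k:ℂ)+1)*(((i:ℂ)+(k:ℂ)+3)*s + β) * v (i+k+1) := by
      rw [show i+k+1 = (i+k)+1 from rfl] at *
      convert hrec using 2 <;> push_cast <;> ring
    linear_combination (((i:ℂ)+3)*s - β) * s^k * v (i+k+1) * hA
      + (Nat.choose (i+k) i : ℂ) * s^k * hrec'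
      + (2*(i:ℂ)+(k:ℂ)+6) * s^(k+1) * v (i+k+1) * hB
  rw [h1, h2]
  have h3 : (∑ k ∈ range (m+2), (Nat.choose (i+k) i : ℂ) * Wc n (i+k) * s^k * v (i+k))
      = (∑ k ∈ range (m+1), (Nat.choose (i+k) i : ℂ) * Wc n (i+k) * s^k * v (i+k)) := by
    rw [Finset.sum_range_succ]
    have : Wc n (i+(m+1)) = 0 := by rw [show i+(m+1) = n by omega]; exact Wc_self n
    rw [this]
    ring
  rw [h3]
  ring

lemma Wc_ne_zero {n k : ℕ} (h : k < n) : Wc n k ≠ 0 := by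
  have h1 : Wc n k = (((k:ℝ)*((k:ℝ)+5) - (n:ℝ)*((n:ℝ)+5) : ℝ) : ℂ) := by
    simp [Wc]
  rw [h1, Complex.ofReal_ne_zero]
  have hk : (k:ℝ) < (n:ℝ) := by exact_mod_cast h
  have hk0 : (0:ℝ) ≤ (k:ℝ) := Nat.cast_nonneg k
  nlinarith

lemma lemMain (n : ℕ) (s β : ℂ) (u v : ℕ → ℂ) (hun : u n = 1) (hvn : v n = 1)
    (hu : ∀ k < n, Wc n k * u k = ((k:ℂ)+1)*(((k:ℂ)+3)*s - β) * u (k+1))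
    (hv : ∀ k < n, Wc n k * v k = ((k:ℂ)+1)*(((k:ℂ)+3)*s + β) * v (k+1)) :
    ∀ q i, i + q = n →
      (∑ k ∈ range (q+1), (Nat.choose (i+k) i : ℂ) * s^k * v (i+k)) = (-1)^q * u i := by
  intro q
  induction q with
  | zero =>
    intro i hi
    simp only [zero_add, Nat.add_zero] at *
    simp [hi, hvn, hun]
  | succ p ih =>
    intro i hi
    have hR := lemR n s β v hv i p (by omega)
    have hT := ih (i+1) (by omega)
    have hWne : Wc n i ≠ 0 := Wc_ne_zero (by omega)
    have hui := hu i (by omega)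
    apply mul_left_cancel₀ hWne
    rw [show p+1+1 = p+2 from rfl] at *
    have : Wc n i * (∑ k ∈ range (p+2), (Nat.choose (i+k) i : ℂ) * s^k * v (i+k))
        = - (((i:ℂ)+1)*(((i:ℂ)+3)*s - β) * ((-1)^p * u (i+1))) := by
      rw [← hT]
      linear_combination hR
    rw [this]
    linear_combination ((-1:ℂ))^p * hui

lemma lemRefl (n : ℕ) (s x : ℂ) (c e : ℕ → ℂ)
    (hMain : ∀ q i, i + q = n →
      (∑ k ∈ range (q+1), (Nat.choose (i+k) i : ℂ) * s^k * c (i+k)) = (-1)^q * e i) :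
    ∑ k ∈ range (n+1), c k * (s - x)^k = (-1)^n * ∑ i ∈ range (n+1), e i * x^i := by
  have step1 : ∑ k ∈ range (n+1), c k * (s - x)^k
      = ∑ k ∈ range (n+1), ∑ i ∈ range (n+1),
          (if i ≤ k then c k * ((-x)^i * s^(k-i) * (Nat.choose k i : ℂ)) else 0) := by
    apply Finset.sum_congr rfl
    intro k hk
    have hkn : k ≤ n := by simpa [Nat.lt_succ_iff] using hk
    rw [show s - x = -x + s by ring, add_pow, Finset.mul_sum]
    have e1 : ∀ i ∈ range (k+1), c k * ((-x)^i * s^(k-i) * (Nat.choose k i : ℂ))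
        = (if i ≤ k then c k * ((-x)^i * s^(k-i) * (Nat.choose k i : ℂ)) else 0) := by
      intro i hi
      rw [if_pos (by simpa [Nat.lt_succ_iff] using hi)]
    rw [Finset.sum_congr rfl e1]
    apply Finset.sum_subset (Finset.range_subset_range.mpr (by omega))
    intro i _ hi
    rw [if_neg (by simp [Nat.lt_succ_iff] at hi; omega)]
  rw [step1, Finset.sum_comm]
  have step2 : ∀ i ∈ range (n+1),
      (∑ k ∈ range (n+1), (if i ≤ k then c k * ((-x)^i * s^(k-i) * (Nat.choose k i : ℂ)) else 0))
      = (-x)^i * ((-1)^(n-i) * e i) := by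
    intro i hi
    have hin : i ≤ n := by simpa [Nat.lt_succ_iff] using hi
    have hIco : (∑ k ∈ Finset.Ico i (n+1), (if i ≤ k then c k * ((-x)^i * s^(k-i) * (Nat.choose k i : ℂ)) else 0))
        = (∑ k ∈ range (n+1), (if i ≤ k then c k * ((-x)^i * s^(k-i) * (Nat.choose k i : ℂ)) else 0)) := by
      apply Finset.sum_subset
      · intro k hk
        simp only [Finset.mem_Ico] at hk
        simp [hk.2]
      · intro k _ hk
        simp only [Finset.mem_Ico, not_and, not_le] at hk
        by_cases hik : i ≤ k
        · exfalso
          simp only [Finset.mem_range] at *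
          omega
        · rw [if_neg hik]
    rw [← hIco, Finset.sum_Ico_eq_sum_range]
    rw [show n+1-i = (n-i)+1 by omega]
    have key := hMain (n-i) i (by omega)
    calc (∑ k ∈ range ((n-i)+1), (if i ≤ i + k then c (i+k) * ((-x)^i * s^(i+k-i) * (Nat.choose (i+k) i : ℂ)) else 0))
        = (-x)^i * (∑ k ∈ range ((n-i)+1), (Nat.choose (i+k) i : ℂ) * s^k * c (i+k)) := by
          rw [Finset.mul_sum]
          apply Finset.sum_congr rfl
          intro k _
          rw [if_pos (Nat.le_add_right i k), Nat.add_sub_cancel_left]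
          ring
      _ = (-x)^i * ((-1)^(n-i) * e i) := by rw [key]
  rw [Finset.sum_congr rfl step2, Finset.mul_sum]
  apply Finset.sum_congr rfl
  intro i hi
  have hin : i ≤ n := by simpa [Nat.lt_succ_iff] using hi
  have : ((-1:ℂ))^i * (-1:ℂ)^(n-i) = (-1)^n := by
    rw [← pow_add, show i + (n-i) = n by omega]
  rw [neg_pow]
  calc (-1:ℂ)^i * x^i * ((-1)^(n-i) * e i) = ((-1:ℂ)^i * (-1)^(n-i)) * (x^i * e i) := by ring
    _ = (-1)^n * (e i * x^i) := by rw [this]; ring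

theorem stmt_8 (ℓ : ℕ) (hℓ : 4 ≤ ℓ) (rm rp a : ℝ) (hlt : rm < rp) (m : ℤ)
    (M : ℝ) (hM : M = (rp + rm) / 2)
    (Δ : ℝ → ℝ) (hΔ : ∀ r, Δ r = (r - rp) * (r - rm))
    (v₁ : ℝ → ℂ)
    (hv₁ : ∀ r : ℝ, v₁ r = ((r : ℂ) - rm) ^ (ℓ - 2) +
      ∑ k ∈ Finset.range (ℓ - 2),
        (∏ j ∈ Finset.Icc k (ℓ - 3),
          ((j : ℂ) + 1) * (((j : ℂ) + 3) * ((rp : ℂ) - rm) - 2 * Complex.I * a * m) /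
            ((j : ℂ) * ((j : ℂ) + 5) - ((ℓ : ℂ) - 2) * ((ℓ : ℂ) + 3))) *
        ((r : ℂ) - rm) ^ k) :
    (∀ r ∈ Set.Icc rm rp,
        v₁ (2 * M - r) = (-1 : ℂ) ^ (ℓ - 2) * (starRingEnd ℂ) (v₁ r)) ∧
      v₁ rp = (-1 : ℂ) ^ (ℓ - 2) * (starRingEnd ℂ) (v₁ rm) ∧ v₁ rp ≠ 0 := by
  obtain ⟨n, hn2, rfl⟩ : ∃ n, 2 ≤ n ∧ ℓ = n + 2 := ⟨ℓ - 2, by omega, by omega⟩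
  simp only [show n + 2 - 2 = n from by omega, show n + 2 - 3 = n - 1 from by omega] at hv₁ ⊢
  set s : ℂ := (rp:ℂ) - (rm:ℂ) with hs
  set β : ℂ := 2 * Complex.I * (a:ℂ) * (m:ℂ) with hβ
  set c : ℕ → ℂ := fun k => ∏ j ∈ Finset.Icc k (n-1),
      ((j : ℂ) + 1) * (((j : ℂ) + 3) * ((rp : ℂ) - rm) - 2 * Complex.I * a * m) /
        ((j : ℂ) * ((j : ℂ) + 5) - (((n+2 : ℕ) : ℂ) - 2) * (((n+2 : ℕ) : ℂ) + 3)) with hc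
  have hcn : c n = 1 := by
    simp only [hc]
    rw [Finset.Icc_eq_empty (by omega : ¬ n ≤ n - 1)]
    exact Finset.prod_empty
  have hvsum : ∀ r : ℝ, v₁ r = ∑ k ∈ range (n+1), c k * ((r:ℂ) - rm)^k := by
    intro r
    rw [hv₁ r, Finset.sum_range_succ, hcn]
    ring
  have hD : ∀ j : ℕ, (j : ℂ) * ((j : ℂ) + 5) - (((n+2 : ℕ) : ℂ) - 2) * (((n+2 : ℕ) : ℂ) + 3) = Wc n j := by
    intro j
    simp only [Wc]
    push_cast
    ring
  have hcrec : ∀ k < n, Wc n k * c k = ((k:ℂ)+1)*(((k:ℂ)+3)*s + (-β)) * c (k+1) := by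
    intro k hk
    have hsplit : c k = (((k:ℂ)+1) * (((k:ℂ)+3)*s - β) / Wc n k) * c (k+1) := by
      rw [hc]
      have hIcc : ∀ a : ℕ, Finset.Icc a (n-1) = Finset.Ico a n := by
        intro a
        rw [← Finset.Ico_add_one_right_eq_Icc]
        congr 1
        omega
      simp only [hIcc]
      rw [Finset.prod_eq_prod_Ico_succ_bot hk]
      rw [hD k]
    have hW := Wc_ne_zero hk
    calc Wc n k * c k = (Wc n k * (((k:ℂ)+1) * (((k:ℂ)+3)*s - β)) / Wc n k) * c (k+1) := by
          rw [hsplit]; ring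
      _ = (((k:ℂ)+1) * (((k:ℂ)+3)*s - β)) * c (k+1) := by rw [mul_div_cancel_left₀ _ hW]
      _ = ((k:ℂ)+1)*(((k:ℂ)+3)*s + (-β)) * c (k+1) := by ring
  set e : ℕ → ℂ := fun k => (starRingEnd ℂ) (c k) with he
  have hen : e n = 1 := by rw [he]; simp [hcn]
  have herec : ∀ k < n, Wc n k * e k = ((k:ℂ)+1)*(((k:ℂ)+3)*s - (-β)) * e (k+1) := by
    intro k hk
    have h := congrArg (starRingEnd ℂ) (hcrec k hk)
    simp only [map_one, map_mul, map_add, map_sub, map_neg, map_natCast, map_intCast,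
      map_ofNat, Complex.conj_I, Complex.conj_ofReal, hs, hβ, Wc] at h
    simp only [he, hs, hβ, Wc]
    linear_combination h
  have hMain := lemMain n s (-β) e c hen hcn herec hcrec
  have REF : ∀ x : ℂ, ∑ k ∈ range (n+1), c k * (s - x)^k
      = (-1)^n * ∑ i ∈ range (n+1), e i * x^i := fun x => lemRefl n s x c e hMain
  have part1 : ∀ r : ℝ, v₁ (2*M - r) = (-1:ℂ)^n * (starRingEnd ℂ) (v₁ r) := by
    intro r
    rw [hvsum (2*M - r), hvsum r]
    have hx : ((2*M - r : ℝ):ℂ) - (rm:ℂ) = s - (((r:ℝ):ℂ) - rm) := by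
      push_cast [hM]
      ring
    rw [hx, REF]
    congr 1
    rw [map_sum]
    apply Finset.sum_congr rfl
    intro k _
    rw [map_mul, map_pow, map_sub, Complex.conj_ofReal, Complex.conj_ofReal]
  have hrp : (2*M - rm : ℝ) = rp := by rw [hM]; ring
  have part2 : v₁ rp = (-1:ℂ)^n * (starRingEnd ℂ) (v₁ rm) := by
    rw [← hrp]; exact part1 rm
  refine ⟨fun r _ => part1 r, part2, ?_⟩
  have hvrm : v₁ rm = c 0 := by
    rw [hvsum rm]
    rw [show ((rm:ℝ):ℂ) - (rm:ℂ) = 0 from by ring]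
    rw [Finset.sum_eq_single_of_mem 0 (by simp)]
    · simp
    · intro b _ hb
      simp [zero_pow hb]
  have hc0 : c 0 ≠ 0 := by
    rw [hc]
    apply Finset.prod_ne_zero_iff.mpr
    intro j hj
    have hjn : j < n := by
      simp only [Finset.mem_Icc] at hj
      omega
    rw [hD j]
    apply div_ne_zero
    · apply mul_ne_zero
      · exact Nat.cast_add_one_ne_zero j
      · intro heq
        have hre := congrArg Complex.re heq
        simp only [Complex.sub_re, Complex.mul_re, Complex.add_re, Complex.add_im,
          Complex.natCast_re, Complex.natCast_im, Complex.ofReal_re, Complex.ofReal_im,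
          Complex.mul_im, Complex.I_re, Complex.I_im, Complex.re_ofNat, Complex.im_ofNat,
          Complex.intCast_re, Complex.intCast_im, Complex.zero_re] at hre
        have hj0 : (0:ℝ) ≤ (j:ℝ) := Nat.cast_nonneg j
        nlinarith
    · exact Wc_ne_zero hjn
  rw [part2, hvrm]
  apply mul_ne_zero
  · exact pow_ne_zero _ (by norm_num)
  · simp only [ne_eq, map_eq_zero]
    exact hc0
end

section
/- Let v₁ : [r₋, r₊] → ℂ be a solution of Δ v'' + (2iam + 6(r−M)) v' − (ℓ−2)(ℓ+3) v = 0, where Δ(r) = (r−r₊)(r−r₋) ≤ 0 on [r₋,r₊], M = (r₊+r₋)/2, ℓ ≥ 4, a ∈ ℝ, m ∈ ℤ. Then |v₁(r)| ≤ |v₁(r₋)| for all r ∈ [r₋, M]. (Proof idea: multiplying the ODE by conj(v₁') and taking real parts gives (ℓ−2)(ℓ+3)/2 · (|v₁(r₋)|² − |v₁(r)|²) = −(Δ/2)|v₁'(r)|² + 5∫_{r₋}^r (M−r')|v₁'(r')|² dr' ≥ 0 for r ≤ M.) -/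
theorem stmt_9 (ℓ : ℕ) (hℓ : 4 ≤ ℓ) (rm rp a : ℝ) (hlt : rm < rp) (m : ℤ)
    (M : ℝ) (hM : M = (rp + rm) / 2)
    (Δ : ℝ → ℝ) (hΔ : ∀ r, Δ r = (r - rp) * (r - rm))
    (v₁ d dd : ℝ → ℂ)
    (hd : ∀ r ∈ Set.Icc rm rp, HasDerivAt v₁ (d r) r)
    (hdd : ∀ r ∈ Set.Icc rm rp, HasDerivAt d (dd r) r)
    (hcont : ContinuousOn dd (Set.Icc rm rp))
    (hODE : ∀ r ∈ Set.Icc rm rp,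
      (Δ r : ℂ) * dd r + (2 * Complex.I * a * m + 6 * ((r : ℂ) - M)) * d r
        - ((ℓ : ℂ) - 2) * ((ℓ : ℂ) + 3) * v₁ r = 0) :
    ∀ r ∈ Set.Icc rm M, ‖v₁ r‖ ≤ ‖v₁ rm‖ := by
  have hℓ4 : (4:ℝ) ≤ (ℓ:ℝ) := by exact_mod_cast hℓ
  have hrmM : rm < M := by rw [hM]; linarith
  have hMrp : M ≤ rp := by rw [hM]; linarith
  obtain ⟨lr, hlr⟩ : ∃ lr : ℝ, lr = ((ℓ:ℝ) - 2) * ((ℓ:ℝ) + 3) := ⟨_, rfl⟩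
  have hlpos : 0 < lr := by rw [hlr]; nlinarith
  obtain ⟨G, hG⟩ : ∃ G : ℝ → ℝ, G = fun r =>
    Δ r / 2 * Complex.normSq (d r) - lr / 2 * Complex.normSq (v₁ r) := ⟨_, rfl⟩
  -- derivative of G at each point of Icc rm rp
  have hGd : ∀ r ∈ Set.Icc rm rp,
      HasDerivAt G (-5 * (r - M) * Complex.normSq (d r)) r := by
    intro r hr
    have hΔd : HasDerivAt Δ (2 * (r - M)) r := by
      have h1 : HasDerivAt (fun r : ℝ => (r - rp) * (r - rm))
          (1 * (r - rm) + (r - rp) * 1) r :=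
        ((hasDerivAt_id r).sub_const rp).mul ((hasDerivAt_id r).sub_const rm)
      have : (fun r : ℝ => (r - rp) * (r - rm)) = Δ := by funext x; rw [hΔ]
      rw [this] at h1
      convert h1 using 1
      rw [hM]; ring
    -- normSq derivatives
    have nsq : ∀ (f g : ℝ → ℂ), HasDerivAt f (g r) r →
        HasDerivAt (fun r => Complex.normSq (f r))
          (2 * ((g r).re * (f r).re + (g r).im * (f r).im)) r := by
      intro f g hf
      have hre : HasDerivAt (fun r => (f r).re) ((g r).re) r :=
        Complex.reCLM.hasFDerivAt.comp_hasDerivAt r hf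
      have him : HasDerivAt (fun r => (f r).im) ((g r).im) r :=
        Complex.imCLM.hasFDerivAt.comp_hasDerivAt r hf
      have h2 : HasDerivAt (fun r => (f r).re * (f r).re + (f r).im * (f r).im)
          (((g r).re * (f r).re + (f r).re * (g r).re) +
            ((g r).im * (f r).im + (f r).im * (g r).im)) r :=
        (hre.mul hre).add (him.mul him)
      have : (fun r => (f r).re * (f r).re + (f r).im * (f r).im)
          = fun r => Complex.normSq (f r) := by
        funext x; simp [Complex.normSq_apply]
      rw [this] at h2
      convert h2 using 1; ring
    have hnd := nsq d dd (hdd r hr)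
    have hnv := nsq v₁ d (hd r hr)
    rw [hG]
    have h3 : HasDerivAt (fun r =>
        Δ r / 2 * Complex.normSq (d r) - lr / 2 * Complex.normSq (v₁ r))
        ((2 * (r - M) / 2) * Complex.normSq (d r) +
          Δ r / 2 * (2 * ((dd r).re * (d r).re + (dd r).im * (d r).im))
          - lr / 2 * (2 * ((d r).re * (v₁ r).re + (d r).im * (v₁ r).im))) r :=
      ((hΔd.div_const 2).mul hnd).sub (hnv.const_mul (lr / 2))
    convert h3 using 1
    -- use the ODE, taking real part after multiplying by conj (d r)
    have hode := hODE r hr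
    have hre := congrArg Complex.re hode
    have him := congrArg Complex.im hode
    simp [Complex.ext_iff, Complex.mul_re, Complex.mul_im, Complex.normSq_apply,
      Complex.add_re, Complex.add_im] at hre him
    simp only [Complex.normSq_apply, hlr, hG]
    linear_combination (-(d r).re) * hre + (-(d r).im) * him
  have hsub : Set.Icc rm M ⊆ Set.Icc rm rp := Set.Icc_subset_Icc le_rfl hMrp
  have hmono : MonotoneOn G (Set.Icc rm M) := by
    apply monotoneOn_of_deriv_nonneg (convex_Icc rm M)
    · intro x hx
      exact (hGd x (hsub hx)).continuousAt.continuousWithinAt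
    · rw [interior_Icc]
      intro x hx
      exact (hGd x (hsub ⟨hx.1.le, hx.2.le⟩)).differentiableAt.differentiableWithinAt
    · rw [interior_Icc]
      intro x hx
      rw [(hGd x (hsub ⟨hx.1.le, hx.2.le⟩)).deriv]
      have h1 : x - M < 0 := by linarith [hx.2]
      nlinarith [Complex.normSq_nonneg (d x)]
  intro r hr
  have hle : G rm ≤ G r := hmono (Set.left_mem_Icc.mpr hrmM.le) hr hr.1
  have hΔrm : Δ rm = 0 := by rw [hΔ]; ring
  have hΔr : Δ r ≤ 0 := by
    rw [hΔ]
    have : r ≤ rp := le_trans hr.2 hMrp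
    nlinarith [hr.1]
  have hG1 : G rm = - (lr / 2) * Complex.normSq (v₁ rm) := by
    rw [hG]; simp [hΔrm]
  have hG2 : G r ≤ - (lr / 2) * Complex.normSq (v₁ r) := by
    rw [hG]; simp only []
    nlinarith [Complex.normSq_nonneg (d r)]
  have hnsq : Complex.normSq (v₁ r) ≤ Complex.normSq (v₁ rm) := by
    have e1 : Δ rm / 2 * Complex.normSq (d rm) = 0 := by rw [hΔrm]; ring
    have e2 : Δ r / 2 * Complex.normSq (d r) ≤ 0 := by
      have := Complex.normSq_nonneg (d r)
      nlinarith
    have h2 : lr / 2 * Complex.normSq (v₁ r) ≤ lr / 2 * Complex.normSq (v₁ rm) := by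
      linarith
    exact (mul_le_mul_iff_right₀ (by positivity : (0:ℝ) < lr / 2)).mp h2
  rw [Complex.norm_def, Complex.norm_def]
  exact Real.sqrt_le_sqrt hnsq
end
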